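/- arXiv:2001.00849 — 7 statements merged into one kernel-verified Lean document; each statement's English description precedes it below -/
import Mathlib

section
/- For an edge-ordered graph G on n vertices, the order chromatic number χ'_<(G) equals 2 if and only if the canonically edge-ordered complete bipartite graph K_{n,n}^{can} contains G. -/
/-- An edge-ordered graph: a finite simple graph on vertex set `Fin nv`
together with a labeling of (potential) edges.  The edge-order is the order of
the labels; the labeling is required to be injective on the edge set via
`EOGraph.Valid`. -/
structure EOGraph where
  nv : ℕ
  graph : SimpleGraph (Fin nv)
  label : Sym2 (Fin nv) → ℕ

namespace EOGraph

/-- The labeling is injective on the edge set, hence defines a linear order on the edges. -/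
def Valid (G : EOGraph) : Prop :=
  ∀ e ∈ G.graph.edgeSet, ∀ f ∈ G.graph.edgeSet, G.label e = G.label f → e = f

/-- The number of edges of an edge-ordered graph. -/
noncomputable def edges (G : EOGraph) : ℕ := G.graph.edgeSet.ncard

/-- `G.Contains H`: some subgraph of `G`, with the edge-order induced from `G`,
is isomorphic to `H` (via a graph isomorphism preserving the relative order of edges). -/
def Contains (G H : EOGraph) : Prop :=
  ∃ f : Fin H.nv ↪ Fin G.nv,
    (∀ a b, H.graph.Adj a b → G.graph.Adj (f a) (f b)) ∧
    ∀ a b c d, H.graph.Adj a b → H.graph.Adj c d →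
      (H.label s(a, b) < H.label s(c, d) ↔ G.label s(f a, f b) < G.label s(f c, f d))

/-- `G` avoids `H` if no subgraph of `G` (with the induced edge-order) is isomorphic to `H`. -/
def Avoids (G H : EOGraph) : Prop := ¬ G.Contains H

/-- `G` avoids a family if it avoids every member. -/
def AvoidsFam (G : EOGraph) (F : Set EOGraph) : Prop := ∀ H ∈ F, G.Avoids H

/-- Isomorphism of edge-ordered graphs. -/
def Iso (G H : EOGraph) : Prop :=
  ∃ f : Fin G.nv ≃ Fin H.nv,
    (∀ a b, G.graph.Adj a b ↔ H.graph.Adj (f a) (f b)) ∧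
    ∀ a b c d, G.graph.Adj a b → G.graph.Adj c d →
      (G.label s(a, b) < G.label s(c, d) ↔ H.label s(f a, f b) < H.label s(f c, f d))

end EOGraph

/-- A simple graph `G` can avoid the family `F` if some linear order on its edges
(given by a labeling injective on the edge set) makes it into an edge-ordered graph
avoiding `F`. -/
def CanAvoid {n : ℕ} (G : SimpleGraph (Fin n)) (F : Set EOGraph) : Prop :=
  ∃ L : Sym2 (Fin n) → ℕ, (EOGraph.mk n G L).Valid ∧ (EOGraph.mk n G L).AvoidsFam F

/-- The order chromatic number of a family of edge-ordered graphs: the least chromatic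
number of a finite simple graph that cannot avoid the family (`⊤` if every finite
simple graph can avoid it). -/
noncomputable def orderChrom (F : Set EOGraph) : ℕ∞ :=
  ⨅ (n : ℕ) (G : SimpleGraph (Fin n)) (_ : ¬ CanAvoid G F), G.chromaticNumber

/-- The Turán number `lex(n, F)`: the maximum number of edges of an edge-ordered graph
on `n` vertices avoiding the family `F`. -/
noncomputable def lexFam (n : ℕ) (F : Set EOGraph) : ℕ :=
  sSup {m : ℕ | ∃ G : EOGraph, G.nv = n ∧ G.Valid ∧ G.AvoidsFam F ∧ G.edges = m}

/-- Build a symmetric labeling from a function of the (min, max) of the two endpoints. -/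
def symLabel {N : ℕ} (f : Fin N → Fin N → ℕ) : Sym2 (Fin N) → ℕ :=
  Sym2.lift ⟨fun a b => f (min a b) (max a b), fun a b => by
    show f (min a b) (max a b) = f (min b a) (max b a)
    rw [min_comm, max_comm]⟩

/-- The edge-ordered path on `k` vertices `0, 1, …, k-1`, where the edge `{i, i+1}`
gets label `l[i]`. -/
def pathEO (k : ℕ) (l : List ℕ) : EOGraph where
  nv := k
  graph := SimpleGraph.fromRel (fun a b => (a : ℕ) + 1 = (b : ℕ))
  label := symLabel fun a _ => l.getD (a : ℕ) 0

/-- The canonically edge-ordered complete bipartite graph `K_{m,m}^{can}`: vertices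
`0,…,m-1` are the left vertices `u_1,…,u_m`, vertices `m,…,2m-1` are the right vertices
`v_1,…,v_m`, and the edge `u_i v_j` gets label `m*i + j` (1-based `i, j`). -/
def KnnCan (m : ℕ) : EOGraph where
  nv := 2 * m
  graph := SimpleGraph.fromRel fun a b => (a : ℕ) < m ∧ m ≤ (b : ℕ)
  label := symLabel fun a b => m * ((a : ℕ) + 1) + ((b : ℕ) - m + 1)

/-!
If `χ'_<(G) = 2`, some graph with a proper 2-colouring cannot avoid `G`. Order its edges as
their images in `K_{n,n}^{can}`, colour classes going to opposite sides: then `K_{n,n}^{can}`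
contains `G`, and relabelling the vertices used by their rank brings `n` down to `|G|`.

Conversely, given an edge-ordering of `K_{N,N}`, colour each 4-set `a < b < c < d` of `[N]` by
the four comparisons among the edges `u_a v_c`, `u_a v_d`, `u_b v_c`, `u_b v_d`. By Ramsey's
theorem a large homogeneous set gives a sub-`K_{n,n}` on which the order of two edges depends
only on the relative position of their endpoints; reversing rows or columns and possibly
swapping the two sides turns it into the canonical order. So `K_{N,N}` cannot avoid anything
that `K_{n,n}^{can}` contains, while an edgeless graph avoids every `G` with an edge.
-/

open Finset

universe u

section Ramsey

variable {β : Type*}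

theorem exists_endHomogeneous_subset (r : ℕ)
    (hr : ∀ m, ∃ N, ∀ {α : Type u} [LinearOrder α] (S : Finset α), N ≤ #S →
      ∀ c : Finset α → β, ∃ H ⊆ S, #H = m ∧ ∃ b, ∀ s ⊆ H, #s = r → c s = b)
    (j : ℕ) :
    ∃ M, ∀ {α : Type u} [LinearOrder α] (S : Finset α), M ≤ #S →
      ∀ c : Finset α → β, ∃ A ⊆ S, #A = j ∧ ∃ col : α → β,
        ∀ a ∈ A, ∀ s ⊆ A.filter (a < ·), #s = r → c (insert a s) = col a := by
  induction j with
  | zero => exact ⟨0, fun _ _ c => ⟨∅, empty_subset _, rfl, fun _ => c ∅, by simp⟩⟩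
  | succ j ih =>
    obtain ⟨M, hM⟩ := ih
    obtain ⟨N, hN⟩ := hr M
    refine ⟨N + 1, fun S hS c => ?_⟩
    have hne : S.Nonempty := card_pos.1 (by omega)
    set a₀ := S.min' hne
    obtain ⟨H, hHS, hHcard, κ, hκ⟩ := hN (S.erase a₀)
      (by rw [card_erase_of_mem (min'_mem _ _)]; omega) fun s => c (insert a₀ s)
    obtain ⟨A, hAH, hAcard, col, hcol⟩ := hM H hHcard.ge c
    have hlt : ∀ a ∈ A, a₀ < a := fun a ha => by
      obtain ⟨hne, haS⟩ := mem_erase.1 (hHS (hAH ha))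
      exact lt_of_le_of_ne (min'_le S a haS) (Ne.symm hne)
    refine ⟨insert a₀ A,
      insert_subset (min'_mem _ _) fun a ha => mem_of_mem_erase (hHS (hAH ha)),
      by rw [card_insert_of_notMem fun h => (hlt a₀ h).false, hAcard],
      Function.update col a₀ κ, fun a ha s hs hsr => ?_⟩
    rcases mem_insert.1 ha with rfl | ha
    · rw [Function.update_self]
      refine hκ s (fun x hx => hAH ?_) hsr
      have := mem_filter.1 (hs hx)
      exact (mem_insert.1 this.1).resolve_left this.2.ne'
    · rw [Function.update_of_ne (hlt a ha).ne']
      refine hcol a ha s (fun x hx => ?_) hsr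
      obtain ⟨hxA, hax⟩ := mem_filter.1 (hs hx)
      exact mem_filter.2 ⟨(mem_insert.1 hxA).resolve_left ((hlt a ha).trans hax).ne', hax⟩

theorem exists_monochromatic_subset [Fintype β] (r m : ℕ) :
    ∃ N, ∀ {α : Type u} [LinearOrder α] (S : Finset α), N ≤ #S →
      ∀ c : Finset α → β, ∃ H ⊆ S, #H = m ∧ ∃ b, ∀ s ⊆ H, #s = r → c s = b := by
  classical
  induction r generalizing m with
  | zero =>
    refine ⟨m, fun S hS c => ?_⟩
    obtain ⟨H, hHS, hH⟩ := exists_subset_card_eq hS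
    exact ⟨H, hHS, hH, c ∅, fun s _ hs => by rw [card_eq_zero.1 hs]⟩
  | succ r ih =>
    obtain ⟨M, hM⟩ := exists_endHomogeneous_subset r ih (Fintype.card β * m)
    refine ⟨M, fun S hS c => ?_⟩
    obtain ⟨A, hAS, hAcard, col, hcol⟩ := hM S hS c
    obtain ⟨b, -, hb⟩ := exists_le_card_fiber_of_mul_le_card_of_maps_to
      (fun a _ => mem_univ (col a)) ⟨c ∅, mem_univ _⟩ (by rw [card_univ, hAcard])
    obtain ⟨H, hHA, hHcard⟩ := exists_subset_card_eq hb
    refine ⟨H, hHA.trans ((filter_subset _ _).trans hAS), hHcard, b, fun s hs hsr => ?_⟩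
    have hne : s.Nonempty := card_pos.1 (by omega)
    have hmin : s.min' hne ∈ {x ∈ A | col x = b} := hHA (hs (min'_mem s hne))
    rw [← insert_erase (min'_mem s hne), hcol _ (mem_filter.1 hmin).1 _ ?_
      (by rw [card_erase_of_mem (min'_mem s hne), hsr]; rfl)]
    · exact (mem_filter.1 hmin).2
    · intro x hx
      exact mem_filter.2 ⟨(mem_filter.1 (hHA (hs (mem_of_mem_erase hx)))).1,
        lt_of_le_of_ne (min'_le s x (mem_of_mem_erase hx)) (ne_of_mem_erase hx).symm⟩

theorem exists_orderEmbedding_monochromatic [Fintype β] [Nonempty β] (r m : ℕ) :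
    ∃ N, ∀ c : (Fin r → Fin N) → β, ∃ e : Fin m ↪o Fin N, ∃ b,
      ∀ q : Fin r → Fin m, StrictMono q → c (e ∘ q) = b := by
  classical
  obtain ⟨N, hN⟩ := exists_monochromatic_subset (β := β) r m
  refine ⟨N, fun c => ?_⟩
  obtain ⟨H, -, hH, b, hb⟩ := hN (univ : Finset (Fin N)) (by simp)
    fun s => if hs : #s = r then c (s.orderEmbOfFin hs) else Classical.arbitrary β
  refine ⟨H.orderEmbOfFin hH, b, fun q hq => ?_⟩
  set s := univ.image (H.orderEmbOfFin hH ∘ q)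
  have hs : #s = r := by
    rw [card_image_of_injective _ ((OrderEmbedding.strictMono _).comp hq).injective, card_univ,
      Fintype.card_fin]
  have := hb s (fun x hx => by
    obtain ⟨i, -, rfl⟩ := mem_image.1 hx
    exact orderEmbOfFin_mem H hH _) hs
  rwa [dif_pos hs, ← orderEmbOfFin_unique hs (fun i => mem_image_of_mem _ (mem_univ i))
    ((OrderEmbedding.strictMono _).comp hq)] at this

end Ramsey

section Grid

variable {n : ℕ}

def IsLexGrid (h : Fin n → Fin n → ℕ) : Prop :=
  ∀ i j i' j', h i j < h i' j' ↔ i < i' ∨ i = i' ∧ j < j'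

structure GridPattern (h : Fin n → Fin n → ℕ) (R C D X : Prop) : Prop where
  row : ∀ i j j', j < j' → (h i j < h i j' ↔ R)
  col : ∀ i i' j, i < i' → (h i j < h i' j ↔ C)
  diag : ∀ i i' j j', i < i' → j < j' → (h i j < h i' j' ↔ D)
  antidiag : ∀ i i' j j', i < i' → j < j' → (h i j' < h i' j ↔ X)

variable {h : Fin n → Fin n → ℕ} {R C D X : Prop}

theorem lt_iff_not_lt_of_injective_uncurry (hinj : (Function.uncurry h).Injective)
    {i j i' j' : Fin n} (hne : i ≠ i' ∨ j ≠ j') : h i j < h i' j' ↔ ¬ h i' j' < h i j := by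
  have : h i j ≠ h i' j' := fun heq => by
    obtain ⟨rfl, rfl⟩ := Prod.mk.inj (hinj (a₁ := (i, j)) (a₂ := (i', j')) heq)
    simp at hne
  omega

namespace GridPattern

theorem revCols (hinj : (Function.uncurry h).Injective) (hp : GridPattern h R C D X) :
    GridPattern (fun i j => h i j.rev) (¬R) C X D where
  row i j j' hj := by
    rw [lt_iff_not_lt_of_injective_uncurry hinj (.inr (Fin.rev_injective.ne hj.ne)),
      hp.row i _ _ (Fin.rev_lt_rev.2 hj)]
  col i i' j hi := hp.col i i' j.rev hi
  diag i i' j j' hi hj := hp.antidiag i i' _ _ hi (Fin.rev_lt_rev.2 hj)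
  antidiag i i' j j' hi hj := hp.diag i i' _ _ hi (Fin.rev_lt_rev.2 hj)

theorem revRows (hinj : (Function.uncurry h).Injective) (hp : GridPattern h R C D X) :
    GridPattern (fun i j => h i.rev j) R (¬C) (¬X) (¬D) where
  row i j j' hj := hp.row i.rev j j' hj
  col i i' j hi := by
    rw [lt_iff_not_lt_of_injective_uncurry hinj (.inl (Fin.rev_injective.ne hi.ne)),
      hp.col _ _ j (Fin.rev_lt_rev.2 hi)]
  diag i i' j j' hi hj := by
    rw [lt_iff_not_lt_of_injective_uncurry hinj (.inl (Fin.rev_injective.ne hi.ne)),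
      hp.antidiag _ _ j j' (Fin.rev_lt_rev.2 hi) hj]
  antidiag i i' j j' hi hj := by
    rw [lt_iff_not_lt_of_injective_uncurry hinj (.inl (Fin.rev_injective.ne hi.ne)),
      hp.diag _ _ j j' (Fin.rev_lt_rev.2 hi) hj]

theorem transpose (hinj : (Function.uncurry h).Injective) (hp : GridPattern h R C D X) :
    GridPattern (fun i j => h j i) C R D (¬X) where
  row i j j' hj := hp.col j j' i hj
  col i i' j hi := hp.row j i i' hi
  diag i i' j j' hi hj := hp.diag j j' i i' hj hi
  antidiag i i' j j' hi hj := by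
    rw [lt_iff_not_lt_of_injective_uncurry hinj (.inl hj.ne'), hp.antidiag j j' i i' hj hi]

theorem isLexGrid (hp : GridPattern h R C D X) (hR : R) (hC : C) (hX : X) : IsLexGrid h := by
  have hmono : StrictMono fun p : Fin n ×ₗ Fin n => h (ofLex p).1 (ofLex p).2 := by
    rintro ⟨i, j⟩ ⟨i', j'⟩ hlt
    rcases Prod.Lex.toLex_lt_toLex.1 hlt with hi | ⟨rfl, hj⟩
    · rcases lt_trichotomy j j' with hj | rfl | hj
      · exact ((hp.row i j j' hj).2 hR).trans ((hp.col i i' j' hi).2 hC)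
      · exact (hp.col i i' j hi).2 hC
      · exact (hp.antidiag i i' j' j hi hj).2 hX
    · exact (hp.row i j j' hj).2 hR
  exact fun i j i' j' => (hmono.lt_iff_lt (a := toLex (i, j)) (b := toLex (i', j'))).trans
    Prod.Lex.toLex_lt_toLex

theorem isLexGrid_or_isLexGrid_transpose (hinj : (Function.uncurry h).Injective)
    (hp : GridPattern h R C D X) (hR : R) (hC : C) :
    IsLexGrid h ∨ IsLexGrid (fun i j => h j i) := by
  by_cases hX : X
  · exact .inl (hp.isLexGrid hR hC hX)
  · exact .inr ((hp.transpose hinj).isLexGrid hC hR hX)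

theorem exists_isLexGrid (hinj : (Function.uncurry h).Injective) (hp : GridPattern h R C D X) :
    ∃ σ τ : Equiv.Perm (Fin n), IsLexGrid (fun i j => h (σ i) (τ j)) ∨
      IsLexGrid (fun i j => h (σ j) (τ i)) := by
  have hinj' : ∀ σ τ : Equiv.Perm (Fin n),
      (Function.uncurry fun i j => h (σ i) (τ j)).Injective :=
    fun σ τ => hinj.comp (σ.injective.prodMap τ.injective)
  by_cases hR : R <;> by_cases hC : C
  · exact ⟨1, 1, hp.isLexGrid_or_isLexGrid_transpose hinj hR hC⟩
  · exact ⟨Fin.revPerm, 1,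
      (hp.revRows hinj).isLexGrid_or_isLexGrid_transpose (hinj' _ 1) hR hC⟩
  · exact ⟨1, Fin.revPerm,
      (hp.revCols hinj).isLexGrid_or_isLexGrid_transpose (hinj' 1 _) hR hC⟩
  · exact ⟨Fin.revPerm, Fin.revPerm, ((hp.revCols hinj).revRows (hinj' 1 Fin.revPerm)
      |>.isLexGrid_or_isLexGrid_transpose (hinj' _ _) hR hC)⟩

end GridPattern

end Grid

theorem strictMono_vecCons₄ {α : Type*} [Preorder α] {a b c d : α} (hab : a < b) (hbc : b < c)
    (hcd : c < d) : StrictMono ![a, b, c, d] :=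
  Fin.strictMono_iff_lt_succ.2 fun i => by fin_cases i <;> assumption

/-- The colour of a 4-set with rows `a < b` and columns `u < v`, listing its comparisons in the
order of the fields of `GridPattern`. -/
def cellPattern {α : Type*} (g : α → α → ℕ) (a b u v : α) :
    Prop × Prop × Prop × Prop :=
  (g a u < g a v, g a u < g b u, g a u < g b v, g a v < g b u)

theorem exists_isLexGrid_subgrid (n : ℕ) :
    ∃ N, ∀ g : Fin N → Fin N → ℕ, (Function.uncurry g).Injective →
      ∃ σ τ : Fin n → Fin N, σ.Injective ∧ τ.Injective ∧
        (IsLexGrid (fun i j => g (σ i) (τ j)) ∨ IsLexGrid (fun i j => g (σ j) (τ i))) := by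
  obtain ⟨N, hN⟩ :=
    exists_orderEmbedding_monochromatic (β := Prop × Prop × Prop × Prop) 4 (2 * n + 2)
  refine ⟨N, fun g hg => ?_⟩
  obtain ⟨e, ⟨R, C, D, X⟩, hK⟩ := hN fun q => cellPattern g (q 0) (q 1) (q 2) (q 3)
  let row : Fin (n + 1) → Fin N := fun i => e ⟨i, by omega⟩
  let col : Fin (n + 1) → Fin N := fun j => e ⟨n + 1 + j, by omega⟩
  have hcell : ∀ i i' j j', i < i' → j < j' →
      cellPattern g (row i) (row i') (col j) (col j') = (R, C, D, X) := fun i i' j j' hi hj =>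
    hK ![_, _, _, _] (strictMono_vecCons₄ (Fin.mk_lt_mk.2 hi) (Fin.mk_lt_mk.2 (by omega))
      (Fin.mk_lt_mk.2 (by have := Fin.lt_def.1 hj; omega)))
  -- The last row and the last column are spare: they let two cells in one row, or in one
  -- column, be compared through a 4-set.
  have hp : GridPattern (fun i j => g (row i.castSucc) (col j.castSucc)) R C D X := {
    row := fun i j j' hj => (congrArg (·.1) (hcell _ (.last n) _ _ (Fin.castSucc_lt_last i)
      (Fin.castSucc_lt_castSucc_iff.2 hj))).to_iff
    col := fun i i' j hi => (congrArg (·.2.1) (hcell _ _ _ (.last n)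
      (Fin.castSucc_lt_castSucc_iff.2 hi) (Fin.castSucc_lt_last j))).to_iff
    diag := fun i i' j j' hi hj => (congrArg (·.2.2.1) (hcell _ _ _ _
      (Fin.castSucc_lt_castSucc_iff.2 hi) (Fin.castSucc_lt_castSucc_iff.2 hj))).to_iff
    antidiag := fun i i' j j' hi hj => (congrArg (·.2.2.2) (hcell _ _ _ _
      (Fin.castSucc_lt_castSucc_iff.2 hi) (Fin.castSucc_lt_castSucc_iff.2 hj))).to_iff }
  have hrow : (fun i : Fin n => row i.castSucc).Injective := fun i i' h =>
    Fin.ext (by simpa [row, Fin.ext_iff] using h)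
  have hcol : (fun j : Fin n => col j.castSucc).Injective := fun j j' h =>
    Fin.ext (by simpa [col, Fin.ext_iff] using h)
  have hinj :
      (Function.uncurry fun i j : Fin n => g (row i.castSucc) (col j.castSucc)).Injective :=
    hg.comp (hrow.prodMap hcol)
  obtain ⟨σ, τ, hlex⟩ := hp.exists_isLexGrid hinj
  exact ⟨fun i => row (σ i).castSucc, fun j => col (τ j).castSucc, hrow.comp σ.injective,
    hcol.comp τ.injective, hlex⟩

theorem Nat.mul_add_lt_mul_add_iff {t a b c d : ℕ} (hb : b < t) (hd : d < t) :
    t * a + b < t * c + d ↔ a < c ∨ a = c ∧ b < d := by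
  have key : ∀ {a b c d : ℕ}, b < t → a < c → t * a + b < t * c + d := by
    intro a b c d hb hac
    calc t * a + b < t * (a + 1) := by rw [mul_add_one]; omega
      _ ≤ t * c + d := (Nat.mul_le_mul_left t hac).trans (Nat.le_add_right _ _)
  rcases lt_trichotomy a c with hac | rfl | hac
  · simp [hac, key hb hac]
  · simp
  · simp [hac.not_gt, hac.ne', (key hd hac).not_gt]

theorem exists_perm_lt_iff_lt {β : Type*} [LinearOrder β] {k : ℕ} {f : Fin k → β}
    (hf : f.Injective) : ∃ r : Equiv.Perm (Fin k), ∀ v w, r v < r w ↔ f v < f w := by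
  have hmono : StrictMono (f ∘ Tuple.sort f) :=
    (Tuple.monotone_sort f).strictMono_of_injective (hf.comp (Tuple.sort f).injective)
  refine ⟨(Tuple.sort f).symm, fun v w => ?_⟩
  simpa using (hmono.lt_iff_lt (a := (Tuple.sort f).symm v) (b := (Tuple.sort f).symm w)).symm

namespace EOGraph

theorem Contains.trans {A B C : EOGraph} (hAB : A.Contains B) (hBC : B.Contains C) :
    A.Contains C := by
  obtain ⟨f, hfadj, hford⟩ := hAB
  obtain ⟨g, hgadj, hgord⟩ := hBC
  exact ⟨g.trans f, fun a b h => hfadj _ _ (hgadj a b h), fun a b c d hab hcd =>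
    (hgord a b c d hab hcd).trans (hford _ _ _ _ (hgadj a b hab) (hgadj c d hcd))⟩

theorem contains_of_orientation {G H : EOGraph} (f : Fin H.nv ↪ Fin G.nv)
    (P : Fin H.nv → Fin H.nv → Prop) (horient : ∀ a b, H.graph.Adj a b → P a b ∨ P b a)
    (hadj : ∀ a b, P a b → G.graph.Adj (f a) (f b))
    (hlabel : ∀ a b c d, P a b → P c d →
      (H.label s(a, b) < H.label s(c, d) ↔ G.label s(f a, f b) < G.label s(f c, f d))) :
    G.Contains H := by
  have horient' : ∀ a b, H.graph.Adj a b → ∃ a' b', P a' b' ∧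
      s(a, b) = s(a', b') ∧ s(f a, f b) = s(f a', f b') := fun a b hab =>
    (horient a b hab).elim (fun h => ⟨a, b, h, rfl, rfl⟩)
      fun h => ⟨b, a, h, Sym2.eq_swap, Sym2.eq_swap⟩
  refine ⟨f, fun a b hab => ?_, fun a b c d hab hcd => ?_⟩
  · rcases horient a b hab with h | h
    exacts [hadj a b h, (hadj b a h).symm]
  · obtain ⟨a', b', hP, e₁, e₂⟩ := horient' a b hab
    obtain ⟨c', d', hP', e₃, e₄⟩ := horient' c d hcd
    rw [e₁, e₂, e₃, e₄]
    exact hlabel a' b' c' d' hP hP'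

def comap (K : EOGraph) {n : ℕ} (G : SimpleGraph (Fin n)) (φ : Fin n → Fin K.nv) : EOGraph :=
  ⟨n, G, fun e => K.label (e.map φ)⟩

variable {K : EOGraph} {n : ℕ} {G : SimpleGraph (Fin n)}

theorem valid_comap (hK : K.Valid) {φ : Fin n → Fin K.nv} (hφ : φ.Injective)
    (hadj : ∀ a b, G.Adj a b → K.graph.Adj (φ a) (φ b)) : (K.comap G φ).Valid := by
  have hmap : ∀ e ∈ G.edgeSet, e.map φ ∈ K.graph.edgeSet :=
    Sym2.ind (fun a b hab => hadj a b hab)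
  exact fun e he e' he' heq => Sym2.map.injective hφ (hK _ (hmap e he) _ (hmap e' he') heq)

theorem contains_comap (φ : Fin n ↪ Fin K.nv)
    (hadj : ∀ a b, G.Adj a b → K.graph.Adj (φ a) (φ b)) : K.Contains (K.comap G φ) :=
  ⟨φ, hadj, fun _ _ _ _ _ _ => Iff.rfl⟩

end EOGraph

theorem not_canAvoid_singleton_iff {n : ℕ} {G : SimpleGraph (Fin n)} {H : EOGraph} :
    ¬ CanAvoid G {H} ↔ ∀ L, (EOGraph.mk n G L).Valid → (EOGraph.mk n G L).Contains H := by
  simp [CanAvoid, EOGraph.AvoidsFam, EOGraph.Avoids]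

namespace KnnCan

variable {m : ℕ}

def left (i : Fin m) : Fin (KnnCan m).nv := ⟨i, by dsimp [KnnCan]; omega⟩

def right (j : Fin m) : Fin (KnnCan m).nv := ⟨m + j, by dsimp [KnnCan]; omega⟩

theorem val_lt_two_mul (a : Fin (KnnCan m).nv) : (a : ℕ) < 2 * m := a.2

theorem adj_iff {a b : Fin (KnnCan m).nv} :
    (KnnCan m).graph.Adj a b ↔
      (a : ℕ) < m ∧ m ≤ (b : ℕ) ∨ (b : ℕ) < m ∧ m ≤ (a : ℕ) := by
  refine ⟨And.right, fun h => ⟨fun hab => ?_, h⟩⟩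
  subst hab
  omega

theorem adj_left_right (i j : Fin m) : (KnnCan m).graph.Adj (left i) (right j) :=
  adj_iff.2 (.inl ⟨i.2, Nat.le_add_right _ _⟩)

theorem left_injective : (left : Fin m → Fin (KnnCan m).nv).Injective :=
  fun _ _ h => Fin.ext (Fin.mk.inj h)

theorem right_injective : (right : Fin m → Fin (KnnCan m).nv).Injective :=
  fun _ _ h => Fin.ext (by simpa [right] using h)

theorem left_ne_right {i j : Fin m} : left i ≠ right j :=
  fun h => by simp [left, right, Fin.ext_iff] at h; omega

theorem exists_left_right_of_adj {a b : Fin (KnnCan m).nv} (hab : (KnnCan m).graph.Adj a b) :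
    (∃ i j, a = left i ∧ b = right j) ∨ (∃ i j, b = left i ∧ a = right j) := by
  have := val_lt_two_mul a
  have := val_lt_two_mul b
  rcases adj_iff.1 hab with h | h
  · exact .inl ⟨⟨a, h.1⟩, ⟨b - m, by omega⟩, rfl, Fin.ext (by simp [right]; omega)⟩
  · exact .inr ⟨⟨b, h.1⟩, ⟨a - m, by omega⟩, rfl, Fin.ext (by simp [right]; omega)⟩

theorem colorable_two : (KnnCan m).graph.Colorable 2 :=
  ⟨.mk (fun v => if (v : ℕ) < m then 0 else 1) fun {a b} hab => by
    rcases adj_iff.1 hab with h | h <;> simp [h.1, not_lt.2 h.2]⟩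

theorem label_eq {a b : Fin (KnnCan m).nv} (ha : (a : ℕ) < m) (hb : m ≤ (b : ℕ)) :
    (KnnCan m).label s(a, b) = m * a + (b - m) + (m + 1) := by
  have hab : a ≤ b := Fin.le_def.2 (by omega)
  show m * ((min a b : Fin (KnnCan m).nv) + 1) + ((max a b : Fin (KnnCan m).nv) - m + 1) = _
  rw [min_eq_left hab, max_eq_right hab, mul_add_one]
  omega

theorem label_lt_label_iff {a b c d : Fin (KnnCan m).nv} (ha : (a : ℕ) < m) (hb : m ≤ (b : ℕ))
    (hc : (c : ℕ) < m) (hd : m ≤ (d : ℕ)) :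
    (KnnCan m).label s(a, b) < (KnnCan m).label s(c, d) ↔ a < c ∨ a = c ∧ b < d := by
  rw [label_eq ha hb, label_eq hc hd, add_lt_add_iff_right,
    Nat.mul_add_lt_mul_add_iff (by have := val_lt_two_mul b; omega)
      (by have := val_lt_two_mul d; omega), Fin.lt_def, Fin.lt_def, Fin.ext_iff]
  omega

theorem label_left_right_lt_iff {i j i' j' : Fin m} :
    (KnnCan m).label s(left i, right j) < (KnnCan m).label s(left i', right j') ↔
      i < i' ∨ i = i' ∧ j < j' := by
  rw [label_lt_label_iff i.2 (Nat.le_add_right _ _) i'.2 (Nat.le_add_right _ _)]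
  simp only [left, right, Fin.lt_def, Fin.ext_iff]
  omega

theorem exists_eq_mk_of_mem_edgeSet {e : Sym2 (Fin (KnnCan m).nv)}
    (he : e ∈ (KnnCan m).graph.edgeSet) :
    ∃ a b : Fin (KnnCan m).nv, (a : ℕ) < m ∧ m ≤ (b : ℕ) ∧ e = s(a, b) := by
  induction e using Sym2.ind with | _ a b => ?_
  rcases adj_iff.1 he with h | h
  exacts [⟨a, b, h.1, h.2, rfl⟩, ⟨b, a, h.1, h.2, Sym2.eq_swap⟩]

theorem valid : (KnnCan m).Valid := by
  intro e he e' he' heq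
  obtain ⟨a, b, ha, hb, rfl⟩ := exists_eq_mk_of_mem_edgeSet he
  obtain ⟨c, d, hc, hd, rfl⟩ := exists_eq_mk_of_mem_edgeSet he'
  have h₁ := (label_lt_label_iff ha hb hc hd).not.1 heq.not_lt
  have h₂ := (label_lt_label_iff hc hd ha hb).not.1 heq.not_gt
  rw [Fin.lt_def, Fin.lt_def, Fin.ext_iff] at h₁ h₂
  rw [show a = c by omega, show b = d by omega]

section Place

variable {α : Type*} (p : α → Prop) [DecidablePred p] (r : α → Fin m)

def place (v : α) : Fin (KnnCan m).nv :=
  if p v then left (r v) else right (r v)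

variable {p r}

theorem place_injective (hr : r.Injective) : (place p r).Injective := by
  intro v w h
  have := (r v).2
  have := (r w).2
  simp only [place, left, right] at h
  split_ifs at h <;> simp only [Fin.mk.injEq] at h <;> exact hr (Fin.ext (by omega))

theorem adj_place {v w : α} (h : ¬(p v ↔ p w)) :
    (KnnCan m).graph.Adj (place p r v) (place p r w) := by
  unfold place
  split_ifs with hv hw hw
  exacts [(h (iff_of_true hv hw)).elim, adj_left_right _ _, (adj_left_right _ _).symm,
    (h (iff_of_false hv hw)).elim]

end Place

open EOGraph

theorem contains_of_coloring {n : ℕ} {G : SimpleGraph (Fin n)} (C : G.Coloring (Fin 2))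
    {H : EOGraph} (hH : ¬ CanAvoid G {H}) : (KnnCan n).Contains H := by
  let φ : Fin n ↪ Fin (KnnCan n).nv :=
    ⟨place (C · = 0) id, place_injective Function.injective_id⟩
  have hadj : ∀ a b, G.Adj a b → (KnnCan n).graph.Adj (φ a) (φ b) := fun a b hab =>
    adj_place (p := (C · = 0)) (r := id) fun h => C.valid hab (Fin.fin_two_eq_of_eq_zero_iff h)
  exact (contains_comap φ hadj).trans
    (not_canAvoid_singleton_iff.1 hH _ (valid_comap valid φ.injective hadj))

-- Relabelling the embedded vertices by their rank squeezes the used rows and columns together.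
theorem contains_nv_of_contains {m : ℕ} {H : EOGraph} (h : (KnnCan m).Contains H) :
    (KnnCan H.nv).Contains H := by
  obtain ⟨f, hfadj, hford⟩ := h
  obtain ⟨r, hr⟩ := exists_perm_lt_iff_lt f.injective
  have hr_eq : ∀ v w, r v = r w ↔ f v = f w := fun v w =>
    r.injective.eq_iff.trans f.injective.eq_iff.symm
  let p : Fin H.nv → Prop := fun v => (f v : ℕ) < m
  let ψ : Fin H.nv ↪ Fin (KnnCan H.nv).nv := ⟨place p r, place_injective r.injective⟩
  have hψl : ∀ v, p v → ψ v = left (r v) := fun v hv => if_pos hv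
  have hψr : ∀ v, ¬ p v → ψ v = right (r v) := fun v hv => if_neg hv
  refine contains_of_orientation ψ (fun a b => H.graph.Adj a b ∧ p a ∧ ¬ p b)
    (fun a b hab => ?_) (fun a b hab => adj_place (p := p) (r := r) fun h => hab.2.2 (h.1 hab.2.1))
    fun a b c d hab hcd => ?_
  · rcases adj_iff.1 (hfadj a b hab) with h | h
    exacts [.inl ⟨hab, h.1, h.2.not_gt⟩, .inr ⟨hab.symm, h.1, h.2.not_gt⟩]
  · rw [hψl a hab.2.1, hψr b hab.2.2, hψl c hcd.2.1, hψr d hcd.2.2, hford a b c d hab.1 hcd.1,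
      label_lt_label_iff hab.2.1 (not_lt.1 hab.2.2) hcd.2.1 (not_lt.1 hcd.2.2),
      label_left_right_lt_iff, hr, hr, hr_eq]

theorem contains_of_isLexGrid {n : ℕ} {H : EOGraph} {u v : Fin n → Fin H.nv} (hu : u.Injective)
    (hv : v.Injective) (huv : ∀ i j, u i ≠ v j) (hadj : ∀ i j, H.graph.Adj (u i) (v j))
    (hlex : IsLexGrid fun i j => H.label s(u i, v j)) : H.Contains (KnnCan n) := by
  let F : Fin (KnnCan n).nv ↪ Fin H.nv := ⟨Fin.append u v ∘ Fin.cast (two_mul n),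
    (Fin.append_injective_iff.2 ⟨hu, hv, huv⟩).comp (Fin.cast_injective _)⟩
  have hFleft : ∀ i, F (left i) = u i := fun i => Fin.append_left u v i
  have hFright : ∀ j, F (right j) = v j := fun j => Fin.append_right u v j
  refine contains_of_orientation F (fun a b => ∃ i j, a = left i ∧ b = right j)
    (fun a b hab => ?_) ?_ ?_
  · rcases exists_left_right_of_adj hab with ⟨i, j, rfl, rfl⟩ | ⟨i, j, rfl, rfl⟩
    exacts [.inl ⟨i, j, rfl, rfl⟩, .inr ⟨i, j, rfl, rfl⟩]
  · rintro _ _ ⟨i, j, rfl, rfl⟩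
    rw [hFleft, hFright]
    exact hadj i j
  · rintro _ _ _ _ ⟨i, j, rfl, rfl⟩ ⟨i', j', rfl, rfl⟩
    rw [hFleft, hFright, hFleft, hFright, label_left_right_lt_iff, hlex]

theorem exists_contains_knnCan (n : ℕ) : ∃ N, ∀ L : Sym2 (Fin (KnnCan N).nv) → ℕ,
    (EOGraph.mk _ (KnnCan N).graph L).Valid →
      (EOGraph.mk _ (KnnCan N).graph L).Contains (KnnCan n) := by
  obtain ⟨N, hN⟩ := exists_isLexGrid_subgrid n
  refine ⟨N, fun L hL => ?_⟩
  have hg : (Function.uncurry fun i j => L s(left i, right j)).Injective := by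
    rintro ⟨i, j⟩ ⟨i', j'⟩ h
    rcases Sym2.eq_iff.1 (hL _ (adj_left_right i j) _ (adj_left_right i' j') h) with
      ⟨hi, hj⟩ | ⟨h, -⟩
    · exact Prod.ext (left_injective (a₂ := i') hi) (right_injective (a₂ := j') hj)
    · exact (left_ne_right h).elim
  obtain ⟨σ, τ, hσ, hτ, hlex | hlex⟩ := hN _ hg
  · exact contains_of_isLexGrid (left_injective.comp hσ) (right_injective.comp hτ)
      (fun _ _ => left_ne_right) (fun _ _ => adj_left_right _ _) hlex
  · refine contains_of_isLexGrid (right_injective.comp hτ) (left_injective.comp hσ)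
      (fun _ _ h => left_ne_right h.symm) (fun _ _ => (adj_left_right _ _).symm) ?_
    convert hlex using 4
    exact Sym2.eq_swap

end KnnCan

theorem orderChrom_le_of_not_canAvoid {F : Set EOGraph} {n : ℕ} {G : SimpleGraph (Fin n)}
    (h : ¬ CanAvoid G F) : orderChrom F ≤ G.chromaticNumber :=
  iInf_le_of_le n (iInf_le_of_le G (iInf_le _ h))

theorem exists_not_canAvoid_of_orderChrom_lt {F : Set EOGraph} {k : ℕ∞} (h : orderChrom F < k) :
    ∃ n, ∃ G : SimpleGraph (Fin n), ¬ CanAvoid G F ∧ G.chromaticNumber < k := by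
  simpa [orderChrom, iInf_lt_iff] using h

theorem canAvoid_bot {n : ℕ} {F : Set EOGraph} (hF : ∀ H ∈ F, H.graph.edgeSet.Nonempty) :
    CanAvoid (⊥ : SimpleGraph (Fin n)) F := by
  refine ⟨fun _ => 0, fun e he => by simp at he, fun H hH ⟨f, hf, _⟩ => ?_⟩
  obtain ⟨e, he⟩ := hF H hH
  induction e using Sym2.ind with | _ a b => exact hf a b he

theorem two_le_orderChrom {F : Set EOGraph} (hF : ∀ H ∈ F, H.graph.edgeSet.Nonempty) :
    2 ≤ orderChrom F := by
  refine le_iInf fun n => le_iInf fun G => le_iInf fun hG => ?_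
  obtain ⟨a, b, hab⟩ := G.ne_bot_iff_exists_adj.1 fun h => hG (h ▸ canAvoid_bot hF)
  exact G.two_le_chromaticNumber_of_adj hab

theorem orderChrom_eq_two_iff_knncan_contains_general (G : EOGraph)
    (hne : G.graph.edgeSet.Nonempty) :
    orderChrom {G} = 2 ↔ (KnnCan G.nv).Contains G := by
  constructor
  · intro h
    obtain ⟨n, G', hG', hχ⟩ :=
      exists_not_canAvoid_of_orderChrom_lt (h.trans_lt (by norm_num : (2 : ℕ∞) < 3))
    obtain ⟨C⟩ := SimpleGraph.chromaticNumber_le_iff_colorable.1 (Order.le_of_lt_add_one hχ)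
    exact KnnCan.contains_nv_of_contains (KnnCan.contains_of_coloring C hG')
  · intro hG
    obtain ⟨N, hN⟩ := KnnCan.exists_contains_knnCan G.nv
    refine le_antisymm ?_ (two_le_orderChrom (by simpa using hne))
    calc orderChrom {G} ≤ (KnnCan N).graph.chromaticNumber :=
          orderChrom_le_of_not_canAvoid
            (not_canAvoid_singleton_iff.2 fun L hL => (hN L hL).trans hG)
      _ ≤ 2 := KnnCan.colorable_two.chromaticNumber_le

/-- For an edge-ordered graph `G` on `n` vertices, the order chromatic
number of `G` equals `2` if and only if `K_{n,n}^{can}` contains `G`. -/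
theorem orderChrom_eq_two_iff_knncan_contains (G : EOGraph)
    (hval : G.Valid) (hne : G.graph.edgeSet.Nonempty) :
    orderChrom {G} = 2 ↔ (KnnCan G.nv).Contains G :=
  orderChrom_eq_two_iff_knncan_contains_general G hne
end

section
/- For every positive integer n there exists m₀ such that for all m ≥ m₀, the complete bipartite graph K_{m,m} cannot avoid K_{n,n}^{can}; that is, every linear ordering of the edges of K_{m,m} yields an edge-ordered graph containing K_{n,n}^{can}. -/
/-!
Colour each `2 × 2` minor of the `m × m` grid of labels `L(u_i v_j)` by its order type. Ramsey's
theorem for pairs of rows and pairs of columns (proved through prehomogeneous sequences) gives an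
`(n + 1) × (n + 1)` subgrid all of whose minors have the same type; the extra row and column put
every row and every column of the leading `n × n` block into such a minor, so the labels are
monotone along rows and along columns. Reversing rows and/or columns makes them increase, and then,
according to the sign of the antidiagonal comparison `L(u_i v_j') < L(u_i' v_j)` for `i < i'`,
`j < j'`, either the block or its transpose is ordered lexicographically: a copy of
`K_{n,n}^{can}`.
-/

open Function Finset

section Ramsey

variable {α : Type*} [Fintype α] [Nonempty α]

/-- Length of a set guaranteed to contain a prehomogeneous sequence of length `t` for a
`k`-colouring of pairs. -/
def prehomBound (k : ℕ) : ℕ → ℕ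
  | 0 => 0
  | t + 1 => k * prehomBound k t + 1

theorem exists_prehomogeneous {β : Type*} [LinearOrder β] (χ : β → β → α) (t : ℕ)
    (S : Finset β) (hS : prehomBound (Fintype.card α) t ≤ #S) :
    ∃ x : Fin t → β, StrictMono x ∧ (∀ i, x i ∈ S) ∧
      ∃ c : Fin t → α, ∀ i j, i < j → χ (x i) (x j) = c i := by
  classical
  induction t generalizing S with
  | zero => exact ⟨Fin.elim0, fun i => i.elim0, fun i => i.elim0, Fin.elim0, fun i => i.elim0⟩
  | succ t ih =>
    have hne : S.Nonempty := card_pos.mp (by simp only [prehomBound] at hS; omega)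
    set a := S.min' hne
    have haS : a ∈ S := S.min'_mem hne
    obtain ⟨c₀, -, hc₀⟩ := exists_le_card_fiber_of_mul_le_card_of_maps_to
      (s := S.erase a) (f := χ a) (n := prehomBound (Fintype.card α) t)
      (fun _ _ => mem_univ _) univ_nonempty
      (by rw [card_univ, card_erase_of_mem haS]; simp only [prehomBound] at hS; omega)
    obtain ⟨x, hx, hxS, c, hc⟩ := ih _ hc₀
    have hxS' : ∀ i, x i ∈ S.erase a ∧ χ a (x i) = c₀ := fun i => mem_filter.mp (hxS i)
    have ha_lt : ∀ i, a < x i := fun i =>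
      lt_of_le_of_ne (S.min'_le _ (mem_of_mem_erase (hxS' i).1)) (ne_of_mem_erase (hxS' i).1).symm
    refine ⟨Fin.cons a x, Fin.strictMono_cons.mpr ⟨ha_lt, hx⟩,
      Fin.cases haS fun i => mem_of_mem_erase (hxS' i).1, Fin.cons c₀ c, ?_⟩
    intro i j hij
    induction j using Fin.cases with
    | zero => exact absurd hij (Fin.not_lt_zero i)
    | succ j =>
      induction i using Fin.cases with
      | zero => exact (hxS' j).2
      | succ i => exact hc i j (Fin.succ_lt_succ_iff.mp hij)

theorem exists_monochromatic_pairs {β : Type*} [LinearOrder β] [Fintype β] (s : ℕ)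
    (χ : β → β → α)
    (hβ : prehomBound (Fintype.card α) (Fintype.card α * s) ≤ Fintype.card β) :
    ∃ x : Fin s → β, StrictMono x ∧ ∃ c, ∀ i j, i < j → χ (x i) (x j) = c := by
  classical
  obtain ⟨x, hx, -, c, hc⟩ := exists_prehomogeneous χ _ univ (by rwa [card_univ])
  obtain ⟨c₀, hc₀⟩ := Fintype.exists_le_card_fiber_of_mul_le_card c (n := s) (by simp)
  obtain ⟨I, hIsub, hIcard⟩ := exists_subset_card_eq hc₀
  let e := I.orderEmbOfFin hIcard
  refine ⟨x ∘ e, hx.comp e.strictMono, c₀, fun i j hij => ?_⟩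
  rw [comp_apply, comp_apply, hc _ _ (e.strictMono hij)]
  exact (mem_filter.mp (hIsub (I.orderEmbOfFin_mem hIcard i))).2

theorem exists_monochromatic_grid (s : ℕ) :
    ∃ N, ∀ m, N ≤ m → ∀ χ : Fin m → Fin m → Fin m → Fin m → α,
      ∃ x y : Fin s → Fin m, StrictMono x ∧ StrictMono y ∧
        ∃ c, ∀ i j k l, i < j → k < l → χ (x i) (x j) (y k) (y l) = c := by
  classical
  set N₂ := prehomBound (Fintype.card α) (Fintype.card α * s)
  set k₁ := Fintype.card (Fin N₂ → Fin N₂ → α)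
  refine ⟨max (prehomBound k₁ (k₁ * s)) N₂, fun m hm χ => ?_⟩
  have hN₂ : N₂ ≤ m := le_of_max_le_right hm
  -- colour a pair of rows by the whole colouring it induces on the first `N₂` columns
  obtain ⟨x, hx, c₁, hc₁⟩ := exists_monochromatic_pairs s
    (fun i i' (k l : Fin N₂) => χ i i' (Fin.castLE hN₂ k) (Fin.castLE hN₂ l))
    (by rw [Fintype.card_fin]; exact le_of_max_le_left hm)
  obtain ⟨y, hy, c, hc⟩ := exists_monochromatic_pairs s c₁ (by rw [Fintype.card_fin])
  refine ⟨x, Fin.castLE hN₂ ∘ y, hx, (Fin.strictMono_castLE hN₂).comp hy, c,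
    fun i j k l hij hkl => ?_⟩
  rw [← hc k l hkl, ← hc₁ i j hij]
  rfl

end Ramsey

theorem Function.Injective2.comp_injective {α β γ α' β' : Type*} {v : α → β → γ}
    (hv : Injective2 v) {f : α' → α} {g : β' → β} (hf : Injective f) (hg : Injective g) :
    Injective2 fun a b => v (f a) (g b) :=
  fun _ _ _ _ h => ⟨hf (hv h).1, hg (hv h).2⟩

section GridPattern

variable {α β γ : Type*} [LinearOrder α] [LinearOrder β] [LinearOrder γ]

/-- All `2 × 2` minors of the grid `v` have the same order type, recorded by four comparisons:
`r` along a row, `c` along a column, `d` along the diagonal and `t` along the antidiagonal. -/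
structure IsGridPattern (v : α → β → γ) (r c d t : Bool) : Prop where
  row : ∀ a b b', b < b' → (v a b < v a b' ↔ r)
  col : ∀ a a' b, a < a' → (v a b < v a' b ↔ c)
  diag : ∀ a a' b b', a < a' → b < b' → (v a b < v a' b' ↔ d)
  anti : ∀ a a' b b', a < a' → b < b' → (v a b' < v a' b ↔ t)

def minorType (v : α → β → γ) (a a' : α) (b b' : β) : Bool × Bool × Bool × Bool :=
  (v a b < v a b', v a b < v a' b, v a b < v a' b', v a b' < v a' b)

theorem isGridPattern_castSucc_of_minorType_eq {k l : ℕ} {v : Fin (k + 1) → Fin (l + 1) → γ}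
    {r c d t : Bool}
    (h : ∀ a a' b b', a < a' → b < b' → minorType v a a' b b' = (r, c, d, t)) :
    IsGridPattern (fun (a : Fin k) (b : Fin l) => v a.castSucc b.castSucc) r c d t := by
  simp only [minorType, Prod.mk.injEq] at h
  refine ⟨fun a b b' hb => ?_, fun a a' b ha => ?_, fun a a' b b' ha hb => ?_,
    fun a a' b b' ha hb => ?_⟩
  · rw [← (h _ _ _ _ a.castSucc_lt_succ (Fin.castSucc_lt_castSucc_iff.mpr hb)).1,
      decide_eq_true_iff]
  · rw [← (h _ _ _ _ (Fin.castSucc_lt_castSucc_iff.mpr ha) b.castSucc_lt_succ).2.1,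
      decide_eq_true_iff]
  · rw [← (h _ _ _ _ (Fin.castSucc_lt_castSucc_iff.mpr ha)
      (Fin.castSucc_lt_castSucc_iff.mpr hb)).2.2.1, decide_eq_true_iff]
  · rw [← (h _ _ _ _ (Fin.castSucc_lt_castSucc_iff.mpr ha)
      (Fin.castSucc_lt_castSucc_iff.mpr hb)).2.2.2, decide_eq_true_iff]

namespace IsGridPattern

variable {v : α → β → γ} {r c d t : Bool}

private theorem lt_iff_not_lt_of_ne {x y : γ} (h : x ≠ y) : x < y ↔ ¬ y < x :=
  (not_lt.trans h.le_iff_lt).symm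

theorem comp_strictAnti_left {α' : Type*} [LinearOrder α'] {σ : α' → α}
    (hσ : StrictAnti σ) (hv : Injective2 v) (h : IsGridPattern v r c d t) :
    IsGridPattern (fun a b => v (σ a) b) r (!c) (!t) (!d) where
  row a := h.row (σ a)
  col a a' b ha := by
    rw [lt_iff_not_lt_of_ne fun e => (hσ ha).ne' (hv e).1, h.col _ _ _ (hσ ha)]
    simp
  diag a a' b b' ha hb := by
    rw [lt_iff_not_lt_of_ne fun e => (hσ ha).ne' (hv e).1, h.anti _ _ _ _ (hσ ha) hb]
    simp
  anti a a' b b' ha hb := by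
    rw [lt_iff_not_lt_of_ne fun e => (hσ ha).ne' (hv e).1, h.diag _ _ _ _ (hσ ha) hb]
    simp

theorem comp_strictAnti_right {β' : Type*} [LinearOrder β'] {σ : β' → β}
    (hσ : StrictAnti σ) (hv : Injective2 v) (h : IsGridPattern v r c d t) :
    IsGridPattern (fun a b => v a (σ b)) (!r) c t d where
  row a b b' hb := by
    rw [lt_iff_not_lt_of_ne fun e => (hσ hb).ne' (hv e).2, h.row _ _ _ (hσ hb)]
    simp
  col a a' b := h.col a a' (σ b)
  diag a a' b b' ha hb := h.anti _ _ _ _ ha (hσ hb)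
  anti a a' b b' ha hb := h.diag _ _ _ _ ha (hσ hb)

theorem flip (hv : Injective2 v) (h : IsGridPattern v r c d t) :
    IsGridPattern (flip v) c r d (!t) where
  row b a a' ha := h.col a a' b ha
  col b b' a hb := h.row a b b' hb
  diag b b' a a' hb ha := h.diag a a' b b' ha hb
  anti b b' a a' hb ha := by
    rw [Function.flip_def, lt_iff_not_lt_of_ne fun e => hb.ne (hv e).2,
      h.anti _ _ _ _ ha hb]
    simp

theorem strictMono_lex (h : IsGridPattern v true true d true) :
    StrictMono fun p : α ×ₗ β => v (ofLex p).1 (ofLex p).2 := by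
  intro p q hpq
  rcases Prod.Lex.lt_iff.mp hpq with ha | ⟨ha, hb⟩
  · rcases lt_or_ge (ofLex q).2 (ofLex p).2 with hb | hb
    · exact (h.anti _ _ _ _ ha hb).mpr rfl
    · calc v (ofLex p).1 (ofLex p).2 ≤ v (ofLex p).1 (ofLex q).2 := by
            rcases hb.lt_or_eq with hb | hb
            · exact ((h.row _ _ _ hb).mpr rfl).le
            · rw [hb]
        _ < v (ofLex q).1 (ofLex q).2 := (h.col _ _ _ ha).mpr rfl
  · simp only [ha]
    exact (h.row _ _ _ hb).mpr rfl

theorem exists_strictMono_lex {k l : ℕ} {v : Fin k → Fin l → γ} (hv : Injective2 v)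
    (h : IsGridPattern v r c d t) :
    ∃ (f : Fin k → Fin k) (g : Fin l → Fin l), Injective f ∧ Injective g ∧
      (StrictMono (fun p : Fin k ×ₗ Fin l => v (f (ofLex p).1) (g (ofLex p).2)) ∨
        StrictMono (fun p : Fin l ×ₗ Fin k => v (f (ofLex p).2) (g (ofLex p).1))) := by
  obtain ⟨f, g, hf, hg, d', t', h'⟩ : ∃ (f : Fin k → Fin k) (g : Fin l → Fin l),
      Injective f ∧ Injective g ∧
        ∃ d' t', IsGridPattern (fun a b => v (f a) (g b)) true true d' t' := by
    have hrev := h.comp_strictAnti_right Fin.rev_strictAnti hv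
    have hv' := hv.comp_injective injective_id Fin.rev_injective
    cases r <;> cases c
    · exact ⟨Fin.rev, Fin.rev, Fin.rev_injective, Fin.rev_injective, _, _,
        hrev.comp_strictAnti_left Fin.rev_strictAnti hv'⟩
    · exact ⟨id, Fin.rev, injective_id, Fin.rev_injective, _, _, hrev⟩
    · exact ⟨Fin.rev, id, Fin.rev_injective, injective_id, _, _,
        h.comp_strictAnti_left Fin.rev_strictAnti hv⟩
    · exact ⟨id, id, injective_id, injective_id, _, _, h⟩
  refine ⟨f, g, hf, hg, ?_⟩
  cases t'
  · exact Or.inr (h'.flip (hv.comp_injective hf hg)).strictMono_lex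
  · exact Or.inl h'.strictMono_lex

end IsGridPattern

end GridPattern

section Bipartite

variable {m n : ℕ}

def completeBipartiteFin (m : ℕ) : SimpleGraph (Fin (2 * m)) :=
  SimpleGraph.fromRel fun a b => (a : ℕ) < m ∧ m ≤ (b : ℕ)

def leftVertex (i : Fin m) : Fin (2 * m) := Fin.cast (two_mul m).symm (Fin.castAdd m i)

def rightVertex (j : Fin m) : Fin (2 * m) := Fin.cast (two_mul m).symm (Fin.natAdd m j)

@[simp] theorem val_leftVertex (i : Fin m) : (leftVertex i : ℕ) = i := rfl

@[simp] theorem val_rightVertex (j : Fin m) : (rightVertex j : ℕ) = m + j := rfl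

theorem leftVertex_injective : Injective (leftVertex (m := m)) :=
  (Fin.cast_injective _).comp (Fin.castAdd_injective m m)

theorem rightVertex_injective : Injective (rightVertex (m := m)) :=
  (Fin.cast_injective _).comp (Fin.natAdd_injective m m)

theorem leftVertex_ne_rightVertex (i j : Fin m) : leftVertex i ≠ rightVertex j :=
  Fin.ne_of_val_ne (by rw [val_leftVertex, val_rightVertex]; omega)

theorem completeBipartiteFin_adj_leftVertex_rightVertex (i j : Fin m) :
    (completeBipartiteFin m).Adj (leftVertex i) (rightVertex j) := by
  simp only [completeBipartiteFin, SimpleGraph.fromRel_adj, ne_eq, Fin.ext_iff, val_leftVertex,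
    val_rightVertex]
  omega

theorem exists_eq_leftVertex_rightVertex_of_adj {a b : Fin (2 * m)}
    (h : (completeBipartiteFin m).Adj a b) : ∃ i j, s(a, b) = s(leftVertex i, rightVertex j) := by
  simp only [completeBipartiteFin, SimpleGraph.fromRel_adj] at h
  rcases h.2 with ⟨ha, hb⟩ | ⟨hb, ha⟩
  · exact ⟨⟨a, ha⟩, ⟨b - m, by omega⟩, congrArg (s(a, ·)) (Fin.ext (by simp; omega))⟩
  · refine ⟨⟨b, hb⟩, ⟨a - m, by omega⟩, ?_⟩
    rw [Sym2.eq_swap]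
    exact congrArg (s(b, ·)) (Fin.ext (by simp; omega))

theorem injective2_label_of_valid {L : Sym2 (Fin (2 * m)) → ℕ}
    (hL : (EOGraph.mk (2 * m) (completeBipartiteFin m) L).Valid) :
    Injective2 fun i j => L s(leftVertex i, rightVertex j) := by
  intro i i' j j' h
  rcases Sym2.eq_iff.mp (hL _ (completeBipartiteFin_adj_leftVertex_rightVertex i j) _
    (completeBipartiteFin_adj_leftVertex_rightVertex i' j') h) with ⟨hi, hj⟩ | ⟨hij, -⟩
  · exact ⟨leftVertex_injective hi, rightVertex_injective hj⟩
  · exact absurd hij (leftVertex_ne_rightVertex i j')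

theorem KnnCan_label_leftVertex_rightVertex (i j : Fin n) :
    (KnnCan n).label s(leftVertex i, rightVertex j) = n * (i + 1) + (j + 1) := by
  have hle : leftVertex i ≤ rightVertex j := by
    rw [Fin.le_def, val_leftVertex, val_rightVertex]; omega
  simp only [KnnCan, symLabel, Sym2.lift_mk, min_eq_left hle, max_eq_right hle, val_leftVertex,
    val_rightVertex]
  omega

theorem KnnCan_label_lt_iff (i j i' j' : Fin n) :
    (KnnCan n).label s(leftVertex i, rightVertex j) <
        (KnnCan n).label s(leftVertex i', rightVertex j') ↔
      toLex (i, j) < toLex (i', j') := by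
  rw [KnnCan_label_leftVertex_rightVertex, KnnCan_label_leftVertex_rightVertex,
    Prod.Lex.toLex_lt_toLex, Fin.lt_def, Fin.lt_def, Fin.ext_iff]
  rcases lt_trichotomy (i : ℕ) i' with h | h | h
  · have := Nat.mul_le_mul_left n h
    simp only [h, true_or, iff_true]
    nlinarith [j.isLt, j'.isLt]
  · simp only [h, lt_irrefl, false_or, true_and]
    omega
  · have := Nat.mul_le_mul_left n h
    simp only [h.ne', (lt_asymm h), false_or, false_and, iff_false, not_lt]
    nlinarith [j.isLt, j'.isLt]

theorem contains_KnnCan {N : ℕ} {G : SimpleGraph (Fin N)} {L : Sym2 (Fin N) → ℕ}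
    {F F' : Fin n → Fin N} (hF : Injective F) (hF' : Injective F')
    (hadj : ∀ i j, G.Adj (F i) (F' j))
    (hL : StrictMono fun p : Fin n ×ₗ Fin n => L s(F (ofLex p).1, F' (ofLex p).2)) :
    (EOGraph.mk N G L).Contains (KnnCan n) := by
  let e : Fin (2 * n) → Fin N := Fin.append F F' ∘ Fin.cast (two_mul n)
  have he : Injective e := (Fin.append_injective_iff.mpr
    ⟨hF, hF', fun i j => (hadj i j).ne⟩).comp (Fin.cast_injective _)
  have he_map {a b : Fin (2 * n)} {i j : Fin n} (h : s(a, b) = s(leftVertex i, rightVertex j)) :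
      s(e a, e b) = s(F i, F' j) := by
    rw [← Sym2.map_mk, h, Sym2.map_mk]
    exact congrArg₂ (fun x y => s(x, y)) (Fin.append_left F F' i) (Fin.append_right F F' j)
  refine ⟨⟨e, he⟩, fun (a b : Fin (2 * n)) hab => ?_,
    fun (a b a' b' : Fin (2 * n)) hab hab' => ?_⟩
  · obtain ⟨i, j, h⟩ := exists_eq_leftVertex_rightVertex_of_adj hab
    rw [← SimpleGraph.mem_edgeSet]
    exact he_map h ▸ hadj i j
  · obtain ⟨i, j, h⟩ := exists_eq_leftVertex_rightVertex_of_adj hab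
    obtain ⟨i', j', h'⟩ := exists_eq_leftVertex_rightVertex_of_adj hab'
    change (KnnCan n).label (s(a, b) : Sym2 (Fin (2 * n))) <
        (KnnCan n).label (s(a', b') : Sym2 (Fin (2 * n))) ↔ L s(e a, e b) < L s(e a', e b')
    rw [h, h', he_map h, he_map h']
    exact (KnnCan_label_lt_iff i j i' j').trans hL.lt_iff_lt.symm

theorem contains_KnnCan_of_isGridPattern {L : Sym2 (Fin (2 * m)) → ℕ}
    (hL : (EOGraph.mk (2 * m) (completeBipartiteFin m) L).Valid) {φ ψ : Fin n → Fin m}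
    (hφ : Injective φ) (hψ : Injective ψ) {r c d t : Bool}
    (h : IsGridPattern (fun a b => L s(leftVertex (φ a), rightVertex (ψ b))) r c d t) :
    (EOGraph.mk (2 * m) (completeBipartiteFin m) L).Contains (KnnCan n) := by
  obtain ⟨f, g, hf, hg, hlex | hlex⟩ :=
    h.exists_strictMono_lex ((injective2_label_of_valid hL).comp_injective hφ hψ)
  · exact contains_KnnCan (leftVertex_injective.comp (hφ.comp hf))
      (rightVertex_injective.comp (hψ.comp hg))
      (fun _ _ => completeBipartiteFin_adj_leftVertex_rightVertex _ _) hlex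
  · refine contains_KnnCan (rightVertex_injective.comp (hψ.comp hg))
      (leftVertex_injective.comp (hφ.comp hf))
      (fun _ _ => (completeBipartiteFin_adj_leftVertex_rightVertex _ _).symm) ?_
    simpa only [comp_apply, Sym2.eq_swap (a := rightVertex _)] using hlex

end Bipartite

theorem knn_cannot_avoid_knncan_general (n : ℕ) :
    ∃ m₀ : ℕ, ∀ m : ℕ, m₀ ≤ m →
      ¬ CanAvoid (SimpleGraph.fromRel fun a b : Fin (2 * m) => (a : ℕ) < m ∧ m ≤ (b : ℕ))
        {KnnCan n} := by
  obtain ⟨N, hN⟩ := exists_monochromatic_grid (α := Bool × Bool × Bool × Bool) (n + 1)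
  refine ⟨N, fun m hm ⟨L, hL, havoid⟩ => havoid (KnnCan n) rfl ?_⟩
  obtain ⟨x, y, hx, hy, ⟨r, c, d, t⟩, hc⟩ := hN m hm
    (minorType fun i j => L s(leftVertex i, rightVertex j))
  exact contains_KnnCan_of_isGridPattern hL (hx.injective.comp (Fin.castSucc_injective n))
    (hy.injective.comp (Fin.castSucc_injective n))
    (isGridPattern_castSucc_of_minorType_eq
      (v := fun a b => L s(leftVertex (x a), rightVertex (y b))) hc)

/-- For every positive integer `n` there exists `m₀` such that for all
`m ≥ m₀` the complete bipartite graph `K_{m,m}` cannot avoid `K_{n,n}^{can}`: every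
linear ordering of its edges yields an edge-ordered graph containing `K_{n,n}^{can}`. -/
theorem knn_cannot_avoid_knncan (n : ℕ) (hn : 1 ≤ n) :
    ∃ m₀ : ℕ, ∀ m : ℕ, m₀ ≤ m →
      ¬ CanAvoid (SimpleGraph.fromRel fun a b : Fin (2 * m) => (a : ℕ) < m ∧ m ≤ (b : ℕ))
        {KnnCan n} :=
  knn_cannot_avoid_knncan_general n
end

section
/- For every n ≥ 2, the order chromatic number of the edge-ordered graph D_n satisfies χ'_<(D_n) > 2^{n-2}. -/
/-- The underlying simple graph of `D_n`: vertices `0,…,n-1` (standing for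
`x_1,…,x_n`), the edges being exactly the pairs incident to `x_1 = 0` or to
`x_n = n-1`. -/
def Dunder (n : ℕ) : SimpleGraph (Fin n) :=
  SimpleGraph.fromRel fun a b => (a : ℕ) = 0 ∨ (b : ℕ) = n - 1

/-- The edge-ordered graph `D_n` with edge-order
`x_1x_2 < x_1x_3 < ⋯ < x_1x_n < x_2x_n < ⋯ < x_{n-1}x_n`. -/
def Dgraph (n : ℕ) : EOGraph where
  nv := n
  graph := Dunder n
  label := symLabel fun a b => if (a : ℕ) = 0 then (b : ℕ) else (n - 1) + (a : ℕ)

/-!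
Given a proper colouring with `2 ^ (n - 2)` colours, order the vertices by colour and the edges
first by the highest binary digit in which the colours of their ends differ, then by lower end
increasingly and by upper end decreasingly. Inside a dyadic block of `2 ^ (J + 1)` colours, the
edges within its two halves then precede the edges between them.

By induction on `J`, no copy of `D_(J+2)` has its colours in one block of `2 ^ J` colours. If
`x_1` and `x_n` lie in the same half, the order forces every `x_i` into that half. Otherwise it
forces every `x_i` into the half of `x_1`, the edges `x_i x_n` cross between the halves, and so
the leaves of the increasing star `x_1 x_2 < ⋯ < x_1 x_(n-1)` are monotone in the vertex order,
on the side of `x_1` where `x_n` lies. A similar induction shows that a star with `J + 1` edges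
in a block of `2 ^ J` colours cannot have this shape: the crossing edges at its centre come last
and are ordered against their leaves.
-/

open Finset Function

section RankLabel

variable {α β : Type*} [Fintype α] [LinearOrder β]

def rankLabel (k : α → β) (e : α) : ℕ := #{f | k f < k e}

lemma rankLabel_lt_rankLabel_iff {k : α → β} {e f : α} :
    rankLabel k e < rankLabel k f ↔ k e < k f := by
  constructor
  · intro h
    by_contra! hle
    refine h.not_ge (card_le_card fun g hg => ?_)
    simp only [mem_filter, mem_univ, true_and] at hg ⊢
    exact hg.trans_le hle
  · intro h
    refine card_lt_card ⟨fun g hg => ?_, fun hsub => ?_⟩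
    · simp only [mem_filter, mem_univ, true_and] at hg ⊢
      exact hg.trans h
    · simpa using hsub (mem_filter.2 ⟨mem_univ e, h⟩)

lemma rankLabel_injective {k : α → β} (hk : Injective k) : Injective (rankLabel k) := by
  intro e f h
  apply hk
  rcases lt_trichotomy (k e) (k f) with hlt | heq | hgt
  · exact absurd h (rankLabel_lt_rankLabel_iff.2 hlt).ne
  · exact heq
  · exact absurd h (rankLabel_lt_rankLabel_iff.2 hgt).ne'

end RankLabel

/-- The index of the highest binary digit in which `x` and `y` differ. -/
def splitLevel (x y : ℕ) : ℕ := Nat.log 2 (x ^^^ y)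

lemma splitLevel_comm (x y : ℕ) : splitLevel x y = splitLevel y x := by
  rw [splitLevel, splitLevel, Nat.xor_comm]

lemma splitLevel_lt_iff {x y J : ℕ} (h : x ≠ y) :
    splitLevel x y < J ↔ x / 2 ^ J = y / 2 ^ J := by
  rw [splitLevel, Nat.log_lt_iff_lt_pow one_lt_two (Nat.xor_ne_zero_iff.2 h),
    ← Nat.div_eq_zero_iff_lt (by positivity), Nat.xor_div_two_pow, Nat.xor_eq_zero_iff]

lemma le_splitLevel {x y J : ℕ} (h : x / 2 ^ J ≠ y / 2 ^ J) : J ≤ splitLevel x y :=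
  not_lt.1 fun hlt => h ((splitLevel_lt_iff fun hxy => h (by rw [hxy])).1 hlt)

lemma splitLevel_eq {x y J : ℕ} (h : x / 2 ^ (J + 1) = y / 2 ^ (J + 1))
    (h' : x / 2 ^ J ≠ y / 2 ^ J) : splitLevel x y = J :=
  le_antisymm (Nat.lt_succ_iff.1 ((splitLevel_lt_iff fun hxy => h' (by rw [hxy])).2 h))
    (le_splitLevel h')

lemma div_two_pow_succ_eq {x y J : ℕ} (h : x / 2 ^ J = y / 2 ^ J) :
    x / 2 ^ (J + 1) = y / 2 ^ (J + 1) := by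
  rw [pow_succ, ← Nat.div_div_eq_div_mul, ← Nat.div_div_eq_div_mul, h]

/-- A dyadic block of level `J + 1` consists of two blocks of level `J`. -/
lemma div_two_pow_eq_of_ne_of_ne {x y z J : ℕ} (hy : y / 2 ^ (J + 1) = x / 2 ^ (J + 1))
    (hz : z / 2 ^ (J + 1) = x / 2 ^ (J + 1)) (hxy : y / 2 ^ J ≠ x / 2 ^ J)
    (hxz : z / 2 ^ J ≠ x / 2 ^ J) : y / 2 ^ J = z / 2 ^ J := by
  rw [pow_succ, ← Nat.div_div_eq_div_mul, ← Nat.div_div_eq_div_mul] at hy hz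
  omega

section Keys

variable {V : Type*} (c : V → ℕ)

def vertexKey (v : V) : ℕ ×ₗ V := toLex (c v, v)

lemma vertexKey_injective : Injective (vertexKey c) :=
  fun _ _ h => congrArg Prod.snd (toLex.injective h)

variable [LinearOrder V]

def edgeKey (a b : V) : ℕ ×ₗ (ℕ ×ₗ V) ×ₗ (ℕ ×ₗ V)ᵒᵈ :=
  toLex (splitLevel (c a) (c b),
    toLex (min (vertexKey c a) (vertexKey c b),
      OrderDual.toDual (max (vertexKey c a) (vertexKey c b))))

lemma edgeKey_comm (a b : V) : edgeKey c a b = edgeKey c b a := by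
  rw [edgeKey, edgeKey, splitLevel_comm, min_comm, max_comm]

variable {c}

lemma vertexKey_lt_vertexKey {u v : V} (h : c u < c v) : vertexKey c u < vertexKey c v :=
  Prod.Lex.toLex_lt_toLex.2 (Or.inl h)

lemma injective_lift_edgeKey : Injective (Sym2.lift ⟨edgeKey c, edgeKey_comm c⟩) := by
  intro e f h
  induction e with | _ a b
  induction f with | _ x y
  have hkey : edgeKey c a b = edgeKey c x y := h
  obtain ⟨-, hends⟩ := Prod.mk.inj (toLex.injective hkey)
  obtain ⟨hmin, hmax⟩ := Prod.mk.inj (toLex.injective hends)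
  refine Sym2.map.injective (vertexKey_injective c) ?_
  simp only [Sym2.map_mk]
  exact Sym2.inf_eq_inf_and_sup_eq_sup.1 ⟨hmin, OrderDual.toDual.injective hmax⟩

lemma edgeKey_lt_of_splitLevel_lt {a b a' b' : V}
    (h : splitLevel (c a) (c b) < splitLevel (c a') (c b')) : edgeKey c a b < edgeKey c a' b' :=
  Prod.Lex.toLex_lt_toLex.2 (Or.inl h)

lemma edgeKey_lt_of_div_eq_of_div_ne {a b a' b' : V} {J : ℕ} (hab : c a ≠ c b)
    (h : c a / 2 ^ J = c b / 2 ^ J) (h' : c a' / 2 ^ J ≠ c b' / 2 ^ J) :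
    edgeKey c a b < edgeKey c a' b' :=
  edgeKey_lt_of_splitLevel_lt (((splitLevel_lt_iff hab).2 h).trans_le (le_splitLevel h'))

lemma edgeKey_lt_edgeKey_iff_of_max {a a' w : V}
    (hl : splitLevel (c a) (c w) = splitLevel (c a') (c w))
    (ha : vertexKey c a < vertexKey c w) (ha' : vertexKey c a' < vertexKey c w) :
    edgeKey c a w < edgeKey c a' w ↔ vertexKey c a < vertexKey c a' := by
  rw [edgeKey, edgeKey, hl, min_eq_left ha.le, max_eq_right ha.le, min_eq_left ha'.le,
    max_eq_right ha'.le]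
  simp [Prod.Lex.toLex_lt_toLex]

lemma edgeKey_lt_edgeKey_iff_of_min {u b b' : V}
    (hl : splitLevel (c u) (c b) = splitLevel (c u) (c b'))
    (hb : vertexKey c u < vertexKey c b) (hb' : vertexKey c u < vertexKey c b') :
    edgeKey c u b < edgeKey c u b' ↔ vertexKey c b' < vertexKey c b := by
  rw [edgeKey, edgeKey, hl, min_eq_left hb.le, max_eq_right hb.le, min_eq_left hb'.le,
    max_eq_right hb'.le]
  simp [Prod.Lex.toLex_lt_toLex]

end Keys

/-- `u, v 0, …, v (k - 1), w` span a copy of `D_(k+2)` in `G`, playing the roles of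
`x_1, x_2, …, x_(k+1), x_(k+2)`, when the edges are compared through `κ`. -/
structure IsDCopy {V β : Type*} [Preorder β] (G : SimpleGraph V) (κ : V → V → β) (u w : V)
    {k : ℕ} (v : Fin k → V) : Prop where
  adj_left : ∀ i, G.Adj u (v i)
  adj : G.Adj u w
  adj_right : ∀ i, G.Adj (v i) w
  strictMono_left : StrictMono fun i => κ u (v i)
  left_lt : ∀ i, κ u (v i) < κ u w
  lt_right : ∀ i, κ u w < κ (v i) w
  strictMono_right : StrictMono fun i => κ (v i) w

namespace IsDCopy

variable {V β β' : Type*} [Preorder β] [Preorder β'] {G : SimpleGraph V} {κ : V → V → β}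
  {u w : V} {k : ℕ}

lemma castSucc {v : Fin (k + 1) → V} (h : IsDCopy G κ u w v) :
    IsDCopy G κ u w (v ∘ Fin.castSucc) where
  adj_left _ := h.adj_left _
  adj := h.adj
  adj_right _ := h.adj_right _
  strictMono_left := h.strictMono_left.comp Fin.strictMono_castSucc
  left_lt _ := h.left_lt _
  lt_right _ := h.lt_right _
  strictMono_right := h.strictMono_right.comp Fin.strictMono_castSucc

lemma of_lt_imp {κ' : V → V → β'} {v : Fin k → V}
    (hκ : ∀ a b a' b', κ a b < κ a' b' → κ' a b < κ' a' b') (h : IsDCopy G κ u w v) :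
    IsDCopy G κ' u w v where
  adj_left := h.adj_left
  adj := h.adj
  adj_right := h.adj_right
  strictMono_left _ _ hij := hκ _ _ _ _ (h.strictMono_left hij)
  left_lt i := hκ _ _ _ _ (h.left_lt i)
  lt_right i := hκ _ _ _ _ (h.lt_right i)
  strictMono_right _ _ hij := hκ _ _ _ _ (h.strictMono_right hij)

end IsDCopy

section Patterns

variable {V : Type*} [LinearOrder V] {G : SimpleGraph V} {c : V → ℕ}

theorem not_strictMono_vertexKey_of_star (hc : ∀ ⦃a b⦄, G.Adj a b → c a ≠ c b)
    {J : ℕ} {u : V} {v : Fin (J + 1) → V} (hadj : ∀ i, G.Adj u (v i))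
    (hblock : ∀ i, c (v i) / 2 ^ J = c u / 2 ^ J)
    (hkey : StrictMono fun i => edgeKey c u (v i)) (hu : ∀ i, vertexKey c u < vertexKey c (v i)) :
    ¬ StrictMono (vertexKey c ∘ v) := by
  induction J with
  | zero => exact fun _ => hc (hadj 0) (by simpa using (hblock 0).symm)
  | succ J ih =>
    intro hv
    refine ih (v := v ∘ Fin.castSucc) (fun _ => hadj _) (fun i => ?_)
      (hkey.comp Fin.strictMono_castSucc) (fun _ => hu _) (hv.comp Fin.strictMono_castSucc)
    by_contra hi
    have hlast := Fin.castSucc_lt_last i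
    have hsplit_i := splitLevel_eq (hblock i.castSucc).symm (Ne.symm hi)
    by_cases hl : c (v (Fin.last _)) / 2 ^ J = c u / 2 ^ J
    · exact (hkey hlast).not_gt
        (edgeKey_lt_of_div_eq_of_div_ne (hc (hadj _)) hl.symm (Ne.symm hi))
    · have hsplit_l := splitLevel_eq (hblock (Fin.last _)).symm (Ne.symm hl)
      exact (hv hlast).not_gt ((edgeKey_lt_edgeKey_iff_of_min (hsplit_i.trans hsplit_l.symm)
        (hu _) (hu _)).1 (hkey hlast))

theorem not_strictAnti_vertexKey_of_star (hc : ∀ ⦃a b⦄, G.Adj a b → c a ≠ c b)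
    {J : ℕ} {u : V} {v : Fin (J + 1) → V} (hadj : ∀ i, G.Adj u (v i))
    (hblock : ∀ i, c (v i) / 2 ^ J = c u / 2 ^ J)
    (hkey : StrictMono fun i => edgeKey c u (v i)) (hu : ∀ i, vertexKey c (v i) < vertexKey c u) :
    ¬ StrictAnti (vertexKey c ∘ v) := by
  induction J with
  | zero => exact fun _ => hc (hadj 0) (by simpa using (hblock 0).symm)
  | succ J ih =>
    intro hv
    refine ih (v := v ∘ Fin.castSucc) (fun _ => hadj _) (fun i => ?_)
      (hkey.comp Fin.strictMono_castSucc) (fun _ => hu _)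
      (hv.comp_strictMono Fin.strictMono_castSucc)
    by_contra hi
    have hlast := Fin.castSucc_lt_last i
    have hsplit_i := splitLevel_eq (hblock i.castSucc) hi
    by_cases hl : c (v (Fin.last _)) / 2 ^ J = c u / 2 ^ J
    · exact (hkey hlast).not_gt
        (edgeKey_lt_of_div_eq_of_div_ne (hc (hadj _)) hl.symm (Ne.symm hi))
    · have hsplit_l := splitLevel_eq (hblock (Fin.last _)) hl
      have hlt := hkey hlast
      simp only [edgeKey_comm c u] at hlt
      exact (hv hlast).not_gt ((edgeKey_lt_edgeKey_iff_of_max (hsplit_i.trans hsplit_l.symm)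
        (hu _) (hu _)).1 hlt)

theorem not_isDCopy_edgeKey (hc : ∀ ⦃a b⦄, G.Adj a b → c a ≠ c b) {J : ℕ} {u w : V}
    {v : Fin J → V} (hw : c w / 2 ^ J = c u / 2 ^ J) (hv : ∀ i, c (v i) / 2 ^ J = c u / 2 ^ J) :
    ¬ IsDCopy G (edgeKey c) u w v := by
  induction J with
  | zero => exact fun hd => hc hd.adj (by simpa using hw.symm)
  | succ J ih =>
    intro hd
    by_cases huw : c w / 2 ^ J = c u / 2 ^ J
    · refine ih (v := v ∘ Fin.castSucc) huw (fun i => ?_) hd.castSucc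
      by_contra hi
      exact (hd.left_lt _).not_gt
        (edgeKey_lt_of_div_eq_of_div_ne (hc hd.adj) huw.symm (Ne.symm hi))
    have hv' : ∀ i, c (v i) / 2 ^ J = c u / 2 ^ J := by
      intro i
      by_contra hi
      exact (hd.lt_right i).not_gt (edgeKey_lt_of_div_eq_of_div_ne (hc (hd.adj_right i))
        (div_two_pow_eq_of_ne_of_ne (hv i) hw hi huw) (Ne.symm huw))
    have hsplit : ∀ x, c x / 2 ^ J = c u / 2 ^ J → splitLevel (c x) (c w) = J := fun x hx =>
      splitLevel_eq ((div_two_pow_succ_eq hx).trans hw.symm) (hx ▸ Ne.symm huw)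
    rcases lt_or_gt_of_ne huw with hwu | huw
    · -- `w` in the lower half: the star at `u` is decreasing in the vertex order
      have hw_lt : ∀ x, c x / 2 ^ J = c u / 2 ^ J → vertexKey c w < vertexKey c x := fun x hx =>
        vertexKey_lt_vertexKey (Nat.lt_of_div_lt_div (hx ▸ hwu))
      have hsplit' : ∀ x, c x / 2 ^ J = c u / 2 ^ J → splitLevel (c w) (c x) = J := fun x hx =>
        splitLevel_comm (c w) (c x) ▸ hsplit x hx
      refine not_strictAnti_vertexKey_of_star hc hd.adj_left hv' hd.strictMono_left
        (fun i => ?_) (fun i j hij => ?_)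
      · have hlt := hd.lt_right i
        rw [edgeKey_comm c u, edgeKey_comm c (v i)] at hlt
        exact (edgeKey_lt_edgeKey_iff_of_min ((hsplit' u rfl).trans (hsplit' _ (hv' i)).symm)
          (hw_lt u rfl) (hw_lt _ (hv' i))).1 hlt
      · have hlt : edgeKey c (v i) w < edgeKey c (v j) w := hd.strictMono_right hij
        rw [edgeKey_comm c (v i), edgeKey_comm c (v j)] at hlt
        exact (edgeKey_lt_edgeKey_iff_of_min
          ((hsplit' _ (hv' i)).trans (hsplit' _ (hv' j)).symm)
          (hw_lt _ (hv' i)) (hw_lt _ (hv' j))).1 hlt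
    · -- `w` in the upper half: the star at `u` is increasing in the vertex order
      have lt_hw : ∀ x, c x / 2 ^ J = c u / 2 ^ J → vertexKey c x < vertexKey c w := fun x hx =>
        vertexKey_lt_vertexKey (Nat.lt_of_div_lt_div (hx ▸ huw))
      refine not_strictMono_vertexKey_of_star hc hd.adj_left hv' hd.strictMono_left
        (fun i => ?_) (fun i j hij => ?_)
      · exact (edgeKey_lt_edgeKey_iff_of_max ((hsplit u rfl).trans (hsplit _ (hv' i)).symm)
          (lt_hw u rfl) (lt_hw _ (hv' i))).1 (hd.lt_right i)
      · exact (edgeKey_lt_edgeKey_iff_of_max ((hsplit _ (hv' i)).trans (hsplit _ (hv' j)).symm)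
          (lt_hw _ (hv' i)) (lt_hw _ (hv' j))).1 (hd.strictMono_right hij)

end Patterns

section EdgeLabel

variable {V : Type*} [Fintype V] [LinearOrder V] (c : V → ℕ)

def edgeLabel : Sym2 V → ℕ := rankLabel (Sym2.lift ⟨edgeKey c, edgeKey_comm c⟩)

lemma edgeLabel_lt_edgeLabel_iff {a b a' b' : V} :
    edgeLabel c s(a, b) < edgeLabel c s(a', b') ↔ edgeKey c a b < edgeKey c a' b' :=
  rankLabel_lt_rankLabel_iff

lemma edgeLabel_injective : Injective (edgeLabel c) := rankLabel_injective injective_lift_edgeKey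

end EdgeLabel

lemma Dgraph_adj {n : ℕ} {a b : Fin n} (hab : (a : ℕ) < b)
    (h : (a : ℕ) = 0 ∨ (b : ℕ) = n - 1) :
    (Dgraph n).graph.Adj a b :=
  (SimpleGraph.fromRel_adj _ _ _).2 ⟨Fin.ne_of_lt hab, Or.inl h⟩

lemma Dgraph_label {n : ℕ} {a b : Fin n} (hab : a < b) :
    (Dgraph n).label s(a, b) = if (a : ℕ) = 0 then (b : ℕ) else n - 1 + a := by
  simp only [Dgraph, symLabel, Sym2.lift_mk, min_eq_left hab.le, max_eq_right hab.le]

lemma EOGraph.Contains.exists_isDCopy {m n : ℕ} (hn : 2 ≤ n) {G : SimpleGraph (Fin m)}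
    {L : Sym2 (Fin m) → ℕ} (h : (EOGraph.mk m G L).Contains (Dgraph n)) :
    ∃ (u w : Fin m) (v : Fin (n - 2) → Fin m), IsDCopy G (fun a b => L s(a, b)) u w v := by
  obtain ⟨f, hadj, hlabel⟩ := h
  have adj : ∀ a b : Fin n, (a : ℕ) < b → ((a : ℕ) = 0 ∨ (b : ℕ) = n - 1) →
      G.Adj (f a) (f b) :=
    fun a b hab h => hadj a b (Dgraph_adj hab h)
  have lt : ∀ a b a' b' : Fin n, (a : ℕ) < b → (a' : ℕ) < b' →
      ((a : ℕ) = 0 ∨ (b : ℕ) = n - 1) → ((a' : ℕ) = 0 ∨ (b' : ℕ) = n - 1) →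
      (if (a : ℕ) = 0 then (b : ℕ) else n - 1 + a) <
        (if (a' : ℕ) = 0 then (b' : ℕ) else n - 1 + a') →
      L s(f a, f b) < L s(f a', f b') := by
    intro a b a' b' hab hab' h h' hlt
    refine (hlabel a b a' b' (Dgraph_adj hab h) (Dgraph_adj hab' h')).1 ?_
    rwa [Dgraph_label hab, Dgraph_label hab']
  refine ⟨f (⟨0, by omega⟩ : Fin n), f (⟨n - 1, by omega⟩ : Fin n),
    fun i => f (⟨i + 1, by omega⟩ : Fin n),
    fun i => adj _ _ (by simp) (by simp), adj _ _ (by simp; omega) (by simp),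
    fun i => adj _ _ (by simp; omega) (by simp), fun i j hij => lt _ _ _ _ ?_ ?_ ?_ ?_ ?_,
    fun i => lt _ _ _ _ ?_ ?_ ?_ ?_ ?_, fun i => lt _ _ _ _ ?_ ?_ ?_ ?_ ?_,
    fun i j hij => lt _ _ _ _ ?_ ?_ ?_ ?_ ?_⟩
  all_goals try rw [Fin.lt_def] at hij
  all_goals simp <;> omega

theorem avoids_Dgraph_edgeLabel {m n : ℕ} (hn : 2 ≤ n) {G : SimpleGraph (Fin m)}
    {c : Fin m → ℕ} (hc : ∀ ⦃a b⦄, G.Adj a b → c a ≠ c b)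
    (hlt : ∀ v, c v < 2 ^ (n - 2)) :
    (EOGraph.mk m G (edgeLabel c)).Avoids (Dgraph n) := by
  intro h
  obtain ⟨u, w, v, hd⟩ := EOGraph.Contains.exists_isDCopy hn h
  have hzero : ∀ x, c x / 2 ^ (n - 2) = 0 := fun x => Nat.div_eq_of_lt (hlt x)
  exact not_isDCopy_edgeKey hc (by rw [hzero, hzero]) (fun i => by rw [hzero, hzero])
    (hd.of_lt_imp fun _ _ _ _ => (edgeLabel_lt_edgeLabel_iff c).1)

theorem canAvoid_Dgraph_of_colorable {m n : ℕ} (hn : 2 ≤ n) (G : SimpleGraph (Fin m))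
    (hG : G.Colorable (2 ^ (n - 2))) : CanAvoid G {Dgraph n} := by
  obtain ⟨C⟩ := hG
  refine ⟨edgeLabel fun v => C v, fun e _ f _ h => edgeLabel_injective _ h, ?_⟩
  rintro H rfl
  exact avoids_Dgraph_edgeLabel hn (fun a b hab h => C.valid hab (Fin.ext h))
    fun v => (C v).isLt

theorem lt_chromaticNumber_of_not_canAvoid_Dgraph {m n : ℕ} (hn : 2 ≤ n)
    {G : SimpleGraph (Fin m)} (hG : ¬ CanAvoid G {Dgraph n}) :
    (2 : ℕ∞) ^ (n - 2) < G.chromaticNumber := by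
  refine not_le.1 fun hle => hG (canAvoid_Dgraph_of_colorable hn G ?_)
  exact SimpleGraph.chromaticNumber_le_iff_colorable.1 (by exact_mod_cast hle)

/-- For every `n ≥ 2`, the order chromatic number of `D_n` is larger
than `2^(n-2)`. -/
theorem orderChrom_Dgraph_gt (n : ℕ) (hn : 2 ≤ n) :
    ((2 : ℕ∞) ^ (n - 2)) < orderChrom {Dgraph n} := by
  have h : (2 : ℕ∞) ^ (n - 2) + 1 ≤ orderChrom {Dgraph n} :=
    le_iInf₂ fun _ _ => le_iInf fun hG =>
      Order.add_one_le_of_lt (lt_chromaticNumber_of_not_canAvoid_Dgraph hn hG)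
  exact ((ENat.lt_add_one_iff (by simp)).2 le_rfl).trans_le h
end

section
/- The order chromatic number of the edge-ordered diamond D_4 satisfies 10 ≤ χ'_<(D_4) < ∞; in particular there is an edge-ordering of K_9 avoiding D_4 witnessing that χ'_<(D_4) > 9, while some finite simple graph cannot avoid D_4. -/
/-!
Lower bound: `K_9` has a `D_4`-free edge ordering, and it blows up to every 9-colourable graph.
An edge between colour classes `A` and `B` is ordered first by the rank of `AB` in `K_9` and then
lexicographically by its endpoints, where the vertices of class `B` are listed increasingly or
decreasingly as seen from `A`, according to a bit `ε A B`. A copy of `D_4` whose vertices `x₂, x₃`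
lie in different classes projects to a copy in `K_9`. If they lie in one class `B`, the ranks give
`AB < AD < BD` for the classes `A, D` of `x₁, x₄`; the bits are chosen so that then
`ε A B ≠ ε D B`, i.e. `x₂, x₃` are compared oppositely from `x₁` and from `x₄`, contradicting
`x₁x₂ < x₁x₃` and `x₂x₄ < x₃x₄`.

Upper bound: by Ramsey's theorem for triples, an edge ordering of a large complete graph has four
vertices all of whose triangles have the same order type with respect to the vertex order, and
each of the six order types contains `D_4`.
-/

namespace EOGraph

lemma Dgraph_four_adj {a b : Fin 4} :
    (Dgraph 4).graph.Adj a b ↔ a ≠ b ∧ ((a : ℕ) = 0 ∨ (b : ℕ) = 3 ∨ (b : ℕ) = 0 ∨ (a : ℕ) = 3) := by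
  simp only [Dgraph, Dunder, SimpleGraph.fromRel_adj]
  omega

def diamondEdge : Fin 5 → Sym2 (Fin 4) := ![s(0, 1), s(0, 2), s(0, 3), s(1, 3), s(2, 3)]

lemma Dgraph_four_label {a b : Fin 4} (h : (Dgraph 4).graph.Adj a b) :
    ∃ k : Fin 5, s(a, b) = diamondEdge k ∧ (Dgraph 4).label s(a, b) = k + 1 := by
  rw [Dgraph_four_adj] at h
  revert a b
  decide

theorem contains_Dgraph_four_iff (G : EOGraph) :
    G.Contains (Dgraph 4) ↔ ∃ x₁ x₂ x₃ x₄, G.graph.Adj x₁ x₂ ∧ G.graph.Adj x₁ x₃ ∧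
      G.graph.Adj x₁ x₄ ∧ G.graph.Adj x₂ x₄ ∧ G.graph.Adj x₃ x₄ ∧
      G.label s(x₁, x₂) < G.label s(x₁, x₃) ∧ G.label s(x₁, x₃) < G.label s(x₁, x₄) ∧
      G.label s(x₁, x₄) < G.label s(x₂, x₄) ∧ G.label s(x₂, x₄) < G.label s(x₃, x₄) := by
  have hlabel := @Dgraph_four_label
  rw [Contains]
  -- turns `Fin (Dgraph 4).nv` into `Fin 4`, on which numerals elaborate
  dsimp only [Dgraph] at hlabel ⊢
  have e₁₂ : (Dunder 4).Adj 0 1 := Dgraph_four_adj.2 (by decide)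
  have e₁₃ : (Dunder 4).Adj 0 2 := Dgraph_four_adj.2 (by decide)
  have e₁₄ : (Dunder 4).Adj 0 3 := Dgraph_four_adj.2 (by decide)
  have e₂₄ : (Dunder 4).Adj 1 3 := Dgraph_four_adj.2 (by decide)
  have e₃₄ : (Dunder 4).Adj 2 3 := Dgraph_four_adj.2 (by decide)
  constructor
  · rintro ⟨f, hadj, hord⟩
    exact ⟨_, _, _, _, hadj _ _ e₁₂, hadj _ _ e₁₃, hadj _ _ e₁₄, hadj _ _ e₂₄, hadj _ _ e₃₄,
      (hord _ _ _ _ e₁₂ e₁₃).1 (by decide), (hord _ _ _ _ e₁₃ e₁₄).1 (by decide),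
      (hord _ _ _ _ e₁₄ e₂₄).1 (by decide), (hord _ _ _ _ e₂₄ e₃₄).1 (by decide)⟩
  · rintro ⟨x₁, x₂, x₃, x₄, h₁₂, h₁₃, h₁₄, h₂₄, h₃₄, l₁, l₂, l₃, l₄⟩
    have h₂₃ : x₂ ≠ x₃ := by rintro rfl; exact l₁.ne rfl
    set f : Fin 4 → Fin G.nv := ![x₁, x₂, x₃, x₄]
    have hf : Function.Injective f := by
      intro a b hab
      fin_cases a <;> fin_cases b <;> simp_all [f, h₁₂.ne, h₁₃.ne, h₁₄.ne, h₂₄.ne, h₃₄.ne]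
    have hg : StrictMono fun k => G.label ((diamondEdge k).map f) :=
      Fin.strictMono_iff_lt_succ.2 fun i => by fin_cases i <;> simpa [f, diamondEdge]
    refine ⟨⟨f, hf⟩, fun a b h => ?_, fun a b c d h h' => ?_⟩
    · obtain ⟨k, hk, -⟩ := hlabel h
      change s(f a, f b) ∈ G.graph.edgeSet
      rw [← Sym2.map_mk, hk]
      fin_cases k <;> simpa [f, diamondEdge]
    · obtain ⟨k, hk, hl⟩ := hlabel h
      obtain ⟨k', hk', hl'⟩ := hlabel h'
      change _ < _ ↔ G.label s(f a, f b) < G.label s(f c, f d)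
      rw [hl, hl', ← Sym2.map_mk, ← Sym2.map_mk, hk, hk',
        add_lt_add_iff_right, Fin.val_fin_lt]
      exact hg.lt_iff_lt.symm

end EOGraph

lemma le_orderChrom_of_colorable {F : Set EOGraph} {k : ℕ}
    (h : ∀ n (G : SimpleGraph (Fin n)), G.Colorable k → CanAvoid G F) :
    (k + 1 : ℕ∞) ≤ orderChrom F :=
  le_iInf₂ fun n G => le_iInf fun hG => Order.add_one_le_of_lt <| lt_of_not_ge fun hle =>
    hG (h n G (SimpleGraph.chromaticNumber_le_iff_colorable.1 hle))

lemma orderChrom_lt_top {F : Set EOGraph} {n : ℕ} {G : SimpleGraph (Fin n)}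
    (hG : ¬ CanAvoid G F) : orderChrom F < ⊤ :=
  ((iInf₂_le n G).trans (iInf_le _ hG)).trans_lt
    (SimpleGraph.chromaticNumber_le_card.trans_lt (ENat.natCast_lt_top _))

lemma mul_add_lt_mul_add {M a b r s : ℕ} (hr : r < M) (hab : a < b) : a * M + r < b * M + s := by
  have := Nat.mul_le_mul_right M hab
  rw [Nat.succ_mul] at this
  omega

section Blowup

variable {k n : ℕ}

def orient (b : Bool) (x : Fin n) : Fin n := if b then x.rev else x

lemma orient_injective (b : Bool) : Function.Injective (orient (n := n) b) := by
  cases b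
  · exact fun _ _ h => h
  · exact Fin.rev_injective

lemma not_orient_lt_of_orient_lt {b b' : Bool} (h : b ≠ b') {x y : Fin n}
    (h₁ : orient b x < orient b y) : ¬ orient b' x < orient b' y := by
  cases b <;> cases b' <;> simp_all [orient, Fin.rev_lt_rev, lt_asymm]

variable (L : Sym2 (Fin k) → ℕ) (ε : Fin k → Fin k → Bool) (c : Fin n → Fin k)

-- For `c u < c v`: lexicographic in the class pair, then `u`, then `v`.
def blowupWeight (u v : Fin n) : ℕ :=
  L s(c u, c v) * (n * n) + finProdFinEquiv (orient (ε (c v) (c u)) u, orient (ε (c u) (c v)) v)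

def blowupLabel : Sym2 (Fin n) → ℕ :=
  symLabel fun u v => if c u < c v then blowupWeight L ε c u v else blowupWeight L ε c v u

variable {L ε c}

lemma blowupLabel_mk {u v : Fin n} (h : c u < c v) :
    blowupLabel L ε c s(u, v) = blowupWeight L ε c u v := by
  rcases le_total u v with huv | hvu
  · simp [blowupLabel, symLabel, min_eq_left huv, max_eq_right huv, h]
  · simp [blowupLabel, symLabel, min_eq_right hvu, max_eq_left hvu, h.not_gt]

lemma blowupLabel_eq {u v : Fin n} (h : c u ≠ c v) :
    ∃ r < n * n, blowupLabel L ε c s(u, v) = L s(c u, c v) * (n * n) + r := by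
  rcases h.lt_or_gt with h | h
  · exact ⟨_, Fin.isLt _, blowupLabel_mk h⟩
  · exact ⟨_, Fin.isLt _, by rw [Sym2.eq_swap, blowupLabel_mk h, blowupWeight, Sym2.eq_swap]⟩

lemma le_of_blowupLabel_lt {u v u' v' : Fin n} (h : c u ≠ c v) (h' : c u' ≠ c v')
    (hlt : blowupLabel L ε c s(u, v) < blowupLabel L ε c s(u', v')) :
    L s(c u, c v) ≤ L s(c u', c v') := by
  obtain ⟨r, -, hr⟩ := blowupLabel_eq (L := L) (ε := ε) h
  obtain ⟨r', hr'M, hr'⟩ := blowupLabel_eq (L := L) (ε := ε) h'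
  by_contra! hgt
  exact (hr ▸ hr' ▸ hlt).not_gt (mul_add_lt_mul_add hr'M hgt)

lemma blowupLabel_lt_iff {u v v' : Fin n} (h : c u ≠ c v) (hv : c v = c v') :
    blowupLabel L ε c s(u, v) < blowupLabel L ε c s(u, v') ↔
      orient (ε (c u) (c v)) v < orient (ε (c u) (c v)) v' := by
  rcases h.lt_or_gt with h | h
  · rw [blowupLabel_mk h, blowupLabel_mk (hv ▸ h), blowupWeight, blowupWeight, ← hv]
    simp only [finProdFinEquiv_apply_val, add_lt_add_iff_left, Fin.lt_def]
    omega
  · rw [Sym2.eq_swap, blowupLabel_mk h, Sym2.eq_swap (a := u), blowupLabel_mk (hv ▸ h),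
      blowupWeight, blowupWeight, ← hv]
    simp only [finProdFinEquiv_apply_val, add_lt_add_iff_left, Fin.lt_def]
    exact Nat.mul_lt_mul_left u.pos

lemma exists_eq_mk_color_lt {G : SimpleGraph (Fin n)} (C : G.Coloring (Fin k))
    {e : Sym2 (Fin n)} (he : e ∈ G.edgeSet) : ∃ u v, C u < C v ∧ e = s(u, v) := by
  induction e using Sym2.ind with
  | h u v =>
    rcases (C.valid he).lt_or_gt with h | h
    exacts [⟨u, v, h, rfl⟩, ⟨v, u, h, Sym2.eq_swap⟩]

variable (ε) in
theorem blowupLabel_valid (hL : (EOGraph.mk k ⊤ L).Valid) {G : SimpleGraph (Fin n)}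
    (C : G.Coloring (Fin k)) : (EOGraph.mk n G (blowupLabel L ε C)).Valid := by
  intro e he e' he' heq
  obtain ⟨u, v, huv, rfl⟩ := exists_eq_mk_color_lt C he
  obtain ⟨u', v', hu'v', rfl⟩ := exists_eq_mk_color_lt C he'
  change blowupLabel L ε C s(u, v) = blowupLabel L ε C s(u', v') at heq
  rw [blowupLabel_mk huv, blowupLabel_mk hu'v', blowupWeight, blowupWeight] at heq
  have hLeq : L s(C u, C v) = L s(C u', C v') := by
    by_contra hne
    rcases Ne.lt_or_gt hne with h | h
    exacts [(mul_add_lt_mul_add (Fin.isLt _) h).ne heq, (mul_add_lt_mul_add (Fin.isLt _) h).ne' heq]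
  obtain ⟨hu, hv⟩ : C u = C u' ∧ C v = C v' := by
    rcases Sym2.eq_iff.1 (hL _ (by simpa using huv.ne) _ (by simpa using hu'v'.ne) hLeq) with h | h
    · exact h
    · exact absurd (h.1 ▸ h.2 ▸ huv) hu'v'.not_gt
  rw [hLeq, hu, hv, add_right_inj, Fin.val_inj, finProdFinEquiv.apply_eq_iff_eq,
    Prod.mk.injEq] at heq
  rw [orient_injective _ heq.1, orient_injective _ heq.2]

lemma lt_of_blowupLabel_lt (hL : (EOGraph.mk k ⊤ L).Valid) {G : SimpleGraph (Fin n)}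
    (C : G.Coloring (Fin k)) {u v u' v' : Fin n} (h : G.Adj u v) (h' : G.Adj u' v')
    (hne : s(C u, C v) ≠ s(C u', C v'))
    (hlt : blowupLabel L ε C s(u, v) < blowupLabel L ε C s(u', v')) :
    L s(C u, C v) < L s(C u', C v') :=
  (le_of_blowupLabel_lt (C.valid h) (C.valid h') hlt).lt_of_ne fun heq =>
    hne (hL _ (by simpa using C.valid h) _ (by simpa using C.valid h') heq)

theorem blowupLabel_avoids (hL : (EOGraph.mk k ⊤ L).Valid)
    (hLD : (EOGraph.mk k ⊤ L).Avoids (Dgraph 4))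
    (hε : ∀ a b d, L s(a, b) < L s(a, d) → L s(a, d) < L s(b, d) → ε a b ≠ ε d b)
    {G : SimpleGraph (Fin n)} (C : G.Coloring (Fin k)) :
    (EOGraph.mk n G (blowupLabel L ε C)).Avoids (Dgraph 4) := by
  rw [EOGraph.Avoids, EOGraph.contains_Dgraph_four_iff]
  rintro ⟨x₁, x₂, x₃, x₄, h₁₂, h₁₃, h₁₄, h₂₄, h₃₄, l₁, l₂, l₃, l₄⟩
  change blowupLabel L ε C _ < blowupLabel L ε C _ at l₁ l₂ l₃ l₄
  by_cases h₂₃ : C x₂ = C x₃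
  · have s₁ : L s(C x₁, C x₂) < L s(C x₁, C x₄) :=
      lt_of_blowupLabel_lt hL C h₁₂ h₁₄ (Sym2.congr_right.not.2 (C.valid h₂₄)) (l₁.trans l₂)
    have s₂ : L s(C x₁, C x₄) < L s(C x₂, C x₄) :=
      lt_of_blowupLabel_lt hL C h₁₄ h₂₄ (Sym2.congr_left.not.2 (C.valid h₁₂)) l₃
    have t₁ := (blowupLabel_lt_iff (C.valid h₁₂) h₂₃).1 l₁
    rw [Sym2.eq_swap, Sym2.eq_swap (a := x₃)] at l₄
    have t₂ := (blowupLabel_lt_iff (C.valid h₂₄.symm) h₂₃).1 l₄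
    exact not_orient_lt_of_orient_lt (hε _ _ _ s₁ s₂) t₁ t₂
  · refine hLD ((EOGraph.contains_Dgraph_four_iff _).2 ⟨C x₁, C x₂, C x₃, C x₄,
      C.valid h₁₂, C.valid h₁₃, C.valid h₁₄, C.valid h₂₄, C.valid h₃₄, ?_, ?_, ?_, ?_⟩)
    · exact lt_of_blowupLabel_lt hL C h₁₂ h₁₃ (Sym2.congr_right.not.2 h₂₃) l₁
    · exact lt_of_blowupLabel_lt hL C h₁₃ h₁₄ (Sym2.congr_right.not.2 (C.valid h₃₄)) l₂
    · exact lt_of_blowupLabel_lt hL C h₁₄ h₂₄ (Sym2.congr_left.not.2 (C.valid h₁₂)) l₃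
    · exact lt_of_blowupLabel_lt hL C h₂₄ h₃₄ (Sym2.congr_left.not.2 h₂₃) l₄

theorem canAvoid_of_colorable (hL : (EOGraph.mk k ⊤ L).Valid)
    (hLD : (EOGraph.mk k ⊤ L).Avoids (Dgraph 4))
    (hε : ∀ a b d, L s(a, b) < L s(a, d) → L s(a, d) < L s(b, d) → ε a b ≠ ε d b)
    {G : SimpleGraph (Fin n)} (hG : G.Colorable k) : CanAvoid G {Dgraph 4} := by
  obtain ⟨C⟩ := hG
  exact ⟨blowupLabel L ε C, blowupLabel_valid ε hL C,
    by rintro _ rfl; exact blowupLabel_avoids hL hLD hε C⟩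

end Blowup

section DiamondFreeK9

def diamondFreeK9Table : List (List ℕ) :=
  [[0, 19, 30, 7, 21, 0, 17, 18, 24], [19, 0, 11, 29, 14, 32, 15, 25, 22],
   [30, 11, 0, 1, 3, 35, 2, 33, 26], [7, 29, 1, 0, 28, 31, 27, 9, 8],
   [21, 14, 3, 28, 0, 6, 20, 16, 12], [0, 32, 35, 31, 6, 0, 34, 4, 5],
   [17, 15, 2, 27, 20, 34, 0, 23, 10], [18, 25, 33, 9, 16, 4, 23, 0, 13],
   [24, 22, 26, 8, 12, 5, 10, 13, 0]]

def blowupSignK9Table : List (List ℕ) :=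
  [[0, 0, 0, 0, 0, 0, 0, 0, 1], [1, 0, 1, 1, 1, 1, 1, 1, 1], [1, 0, 0, 0, 0, 1, 0, 1, 0],
   [1, 0, 1, 0, 1, 1, 1, 0, 1], [0, 1, 1, 1, 0, 0, 1, 0, 0], [1, 1, 0, 0, 0, 0, 0, 1, 1],
   [1, 1, 1, 1, 0, 1, 0, 1, 0], [0, 0, 0, 0, 1, 0, 1, 0, 0], [0, 0, 0, 0, 0, 0, 0, 0, 0]]

def diamondFreeK9 : Sym2 (Fin 9) → ℕ :=
  symLabel fun a b => (diamondFreeK9Table.getD a []).getD b 0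

def blowupSignK9 (a b : Fin 9) : Bool :=
  (blowupSignK9Table.getD a []).getD b 0 = 1

lemma diamondFreeK9_valid : (EOGraph.mk 9 ⊤ diamondFreeK9).Valid := by
  have key : ∀ a b a' b' : Fin 9, a ≠ b → a' ≠ b' →
      diamondFreeK9 s(a, b) = diamondFreeK9 s(a', b') → s(a, b) = s(a', b') := by
    decide
  intro e he e' he'
  induction e using Sym2.ind
  induction e' using Sym2.ind
  exact key _ _ _ _ (by simpa using he) (by simpa using he')

lemma diamondFreeK9_avoids : (EOGraph.mk 9 ⊤ diamondFreeK9).Avoids (Dgraph 4) := by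
  have key : ∀ a b c d : Fin 9, ¬ (diamondFreeK9 s(a, b) < diamondFreeK9 s(a, c) ∧
      diamondFreeK9 s(a, c) < diamondFreeK9 s(a, d) ∧
      diamondFreeK9 s(a, d) < diamondFreeK9 s(b, d) ∧
      diamondFreeK9 s(b, d) < diamondFreeK9 s(c, d)) := by
    decide
  rw [EOGraph.Avoids, EOGraph.contains_Dgraph_four_iff]
  rintro ⟨a, b, c, d, -, -, -, -, -, hchain⟩
  exact key a b c d hchain

lemma blowupSignK9_ne : ∀ a b d : Fin 9, diamondFreeK9 s(a, b) < diamondFreeK9 s(a, d) →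
    diamondFreeK9 s(a, d) < diamondFreeK9 s(b, d) → blowupSignK9 a b ≠ blowupSignK9 d b := by
  decide

end DiamondFreeK9

section Ramsey

variable {κ : Type*}

def IsHomogeneous {d N t : ℕ} (C : (Fin d → Fin N) → κ) (a : Fin t → Fin N) : Prop :=
  ∃ c, ∀ σ : Fin d → Fin t, StrictMono σ → C (a ∘ σ) = c

def IsEndHomogeneous {d N m : ℕ} (C : (Fin (d + 1) → Fin N) → κ) (a : Fin m → Fin N) : Prop :=
  ∃ col : Fin m → κ, ∀ σ : Fin (d + 1) → Fin m, StrictMono σ → C (a ∘ σ) = col (σ 0)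

lemma Fin.exists_succ_comp_of_ne_zero {k m : ℕ} {σ : Fin k → Fin (m + 1)} (hσ : StrictMono σ)
    (h0 : ∀ i, σ i ≠ 0) : ∃ σ' : Fin k → Fin m, StrictMono σ' ∧ σ = Fin.succ ∘ σ' :=
  ⟨fun i => (σ i).pred (h0 i), fun _ _ hij => Fin.pred_lt_pred_iff.2 (hσ hij),
    funext fun _ => (Fin.succ_pred _ _).symm⟩

lemma exists_strictMono_isEndHomogeneous {d : ℕ}
    (hd : ∀ t, ∃ N, ∀ C : (Fin d → Fin N) → κ,
      ∃ a : Fin t → Fin N, StrictMono a ∧ IsHomogeneous C a) (m : ℕ) :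
    ∃ N, ∀ C : (Fin (d + 1) → Fin N) → κ,
      ∃ a : Fin m → Fin N, StrictMono a ∧ IsEndHomogeneous C a := by
  induction m with
  | zero => exact ⟨0, fun _ => ⟨Fin.elim0, fun i => i.elim0, Fin.elim0, fun σ => (σ 0).elim0⟩⟩
  | succ m ih =>
    -- the least vertex `0` goes first; the rest lies in a set homogeneous for its link colouring
    obtain ⟨E, hE⟩ := ih
    obtain ⟨R, hR⟩ := hd E
    refine ⟨R + 1, fun C => ?_⟩
    obtain ⟨b, hb, c, hc⟩ := hR fun τ => C (Fin.cons 0 (Fin.succ ∘ τ))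
    obtain ⟨a, ha, col, hcol⟩ := hE fun τ => C (Fin.succ ∘ b ∘ τ)
    refine ⟨Fin.cons 0 (Fin.succ ∘ b ∘ a),
      Fin.strictMono_cons.2 ⟨fun _ => Fin.succ_pos _, Fin.strictMono_succ.comp (hb.comp ha)⟩,
      Fin.cons c col, fun σ hσ => ?_⟩
    by_cases h0 : σ 0 = 0
    · have hne : ∀ i : Fin d, σ i.succ ≠ 0 := fun i => ne_of_gt (h0 ▸ hσ (Fin.succ_pos i))
      obtain ⟨σ', hσ', hσσ'⟩ := Fin.exists_succ_comp_of_ne_zero (hσ.comp Fin.strictMono_succ) hne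
      have hcomp : Fin.cons 0 (Fin.succ ∘ b ∘ a) ∘ σ = Fin.cons 0 (Fin.succ ∘ (b ∘ (a ∘ σ'))) := by
        ext i : 1
        refine Fin.cases ?_ (fun i => ?_) i
        · simp [h0]
        · simp [show σ i.succ = (σ' i).succ from congrFun hσσ' i]
      rw [hcomp, h0, Fin.cons_zero]
      exact hc _ (ha.comp hσ')
    · have hne : ∀ i, σ i ≠ 0 := fun i => ne_of_gt <|
        (Fin.pos_iff_ne_zero.2 h0).trans_le (hσ.monotone (Fin.zero_le i))
      obtain ⟨σ', hσ', rfl⟩ := Fin.exists_succ_comp_of_ne_zero hσ hne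
      have := hcol σ' hσ'
      simp only [Function.comp_apply, Fin.cons_succ] at this ⊢
      exact this

theorem exists_strictMono_isHomogeneous (κ : Type*) [Fintype κ] (d t : ℕ) :
    ∃ N, ∀ C : (Fin d → Fin N) → κ, ∃ a : Fin t → Fin N, StrictMono a ∧ IsHomogeneous C a := by
  induction d generalizing t with
  | zero =>
    exact ⟨t, fun C =>
      ⟨id, strictMono_id, C Fin.elim0, fun _ _ => congrArg C (Subsingleton.elim _ _)⟩⟩
  | succ d ih =>
    obtain ⟨N, hN⟩ := exists_strictMono_isEndHomogeneous ih (Fintype.card κ * t + 1)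
    refine ⟨N, fun C => ?_⟩
    obtain ⟨a, ha, col, hcol⟩ := hN C
    classical
    obtain ⟨c, -, hc⟩ := Finset.exists_lt_card_fiber_of_mul_lt_card_of_maps_to
      (s := Finset.univ) (t := Finset.univ) (f := col) (n := t) (fun _ _ => Finset.mem_univ _)
      (by simp)
    obtain ⟨b, hb, hbc⟩ : ∃ b : Fin t → Fin _, StrictMono b ∧ ∀ i, col (b i) = c :=
      ⟨_, (Finset.orderEmbOfFin _ rfl).strictMono.comp (Fin.strictMono_castLE hc.le),
        fun i => (Finset.mem_filter.1 (Finset.orderEmbOfFin_mem _ rfl (Fin.castLE hc.le i))).2⟩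
    refine ⟨a ∘ b, ha.comp hb, c, fun σ hσ => ?_⟩
    rw [Function.comp_assoc, hcol _ (hb.comp hσ)]
    exact hbc _

end Ramsey

section Complete

variable {N : ℕ} {L : Sym2 (Fin N) → ℕ}

def triangleType (L : Sym2 (Fin N) → ℕ) (x y z : Fin N) : Bool × Bool × Bool :=
  (L s(x, y) < L s(x, z), L s(x, y) < L s(y, z), L s(x, z) < L s(y, z))

lemma triangle_labels_ne (hL : (EOGraph.mk N ⊤ L).Valid) {x y z : Fin N} (hxy : x < y)
    (hyz : y < z) : L s(x, y) ≠ L s(x, z) ∧ L s(x, y) ≠ L s(y, z) ∧ L s(x, z) ≠ L s(y, z) := by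
  have edge : ∀ {u v : Fin N}, u < v → s(u, v) ∈ (⊤ : SimpleGraph (Fin N)).edgeSet :=
    fun h => by simpa using h.ne
  have hxz := hxy.trans hyz
  exact ⟨fun h => hyz.ne (Sym2.congr_right.1 (hL _ (edge hxy) _ (edge hxz) h)),
    fun h => hxz.ne (Sym2.congr_right.1 (Sym2.eq_swap.trans (hL _ (edge hxy) _ (edge hyz) h))),
    fun h => hxy.ne (Sym2.congr_left.1 (hL _ (edge hxz) _ (edge hyz) h))⟩

lemma contains_Dgraph_four_of_chain {a : Fin 4 → Fin N} (ha : Function.Injective a)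
    (i j k l : Fin 4) (hne : i ≠ j ∧ i ≠ k ∧ i ≠ l ∧ j ≠ l ∧ k ≠ l)
    (hlt : L s(a i, a j) < L s(a i, a k) ∧ L s(a i, a k) < L s(a i, a l) ∧
      L s(a i, a l) < L s(a j, a l) ∧ L s(a j, a l) < L s(a k, a l)) :
    (EOGraph.mk N ⊤ L).Contains (Dgraph 4) :=
  (EOGraph.contains_Dgraph_four_iff _).2 ⟨a i, a j, a k, a l, ha.ne hne.1, ha.ne hne.2.1,
    ha.ne hne.2.2.1, ha.ne hne.2.2.2.1, ha.ne hne.2.2.2.2, hlt⟩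

theorem contains_Dgraph_four_of_isHomogeneous (hL : (EOGraph.mk N ⊤ L).Valid)
    {a : Fin 4 → Fin N} (ha : StrictMono a)
    (h : IsHomogeneous (fun τ : Fin 3 → Fin N => triangleType L (τ 0) (τ 1) (τ 2)) a) :
    (EOGraph.mk N ⊤ L).Contains (Dgraph 4) := by
  obtain ⟨⟨p, q, r⟩, ht⟩ := h
  have h₀₁₂ : triangleType L (a 0) (a 1) (a 2) = (p, q, r) := ht ![0, 1, 2] (by decide)
  have h₀₁₃ : triangleType L (a 0) (a 1) (a 3) = (p, q, r) := ht ![0, 1, 3] (by decide)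
  have h₀₂₃ : triangleType L (a 0) (a 2) (a 3) = (p, q, r) := ht ![0, 2, 3] (by decide)
  have h₁₂₃ : triangleType L (a 1) (a 2) (a 3) = (p, q, r) := ht ![1, 2, 3] (by decide)
  have := triangle_labels_ne hL (x := a 0) (y := a 1) (z := a 2) (ha (by decide)) (ha (by decide))
  have := triangle_labels_ne hL (x := a 0) (y := a 1) (z := a 3) (ha (by decide)) (ha (by decide))
  have := triangle_labels_ne hL (x := a 0) (y := a 2) (z := a 3) (ha (by decide)) (ha (by decide))
  have := triangle_labels_ne hL (x := a 1) (y := a 2) (z := a 3) (ha (by decide)) (ha (by decide))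
  have swap : ∀ i j : Fin 4, j < i → s(a i, a j) = s(a j, a i) := fun _ _ _ => Sym2.eq_swap
  -- the order types `(false, true, false)` and `(true, false, true)` are cyclic, hence impossible
  cases p <;> cases q <;> cases r <;>
    simp only [triangleType, Prod.mk.injEq, decide_eq_true_eq, decide_eq_false_iff_not,
      not_lt] at h₀₁₂ h₀₁₃ h₀₂₃ h₁₂₃
  · exact contains_Dgraph_four_of_chain ha.injective 3 2 1 0 (by decide)
      (by simp (disch := decide) only [swap]; omega)
  · exact contains_Dgraph_four_of_chain ha.injective 3 0 1 2 (by decide)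
      (by simp (disch := decide) only [swap]; omega)
  · omega
  · exact contains_Dgraph_four_of_chain ha.injective 0 3 2 1 (by decide)
      (by simp (disch := decide) only [swap]; omega)
  · exact contains_Dgraph_four_of_chain ha.injective 1 2 3 0 (by decide)
      (by simp (disch := decide) only [swap]; omega)
  · omega
  · exact contains_Dgraph_four_of_chain ha.injective 2 1 0 3 (by decide)
      (by simp (disch := decide) only [swap]; omega)
  · exact contains_Dgraph_four_of_chain ha.injective 0 1 2 3 (by decide) (by omega)

theorem exists_not_canAvoid_top : ∃ N, ¬ CanAvoid (⊤ : SimpleGraph (Fin N)) {Dgraph 4} := by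
  obtain ⟨N, hN⟩ := exists_strictMono_isHomogeneous (Bool × Bool × Bool) 3 4
  refine ⟨N, fun ⟨L, hL, hav⟩ => ?_⟩
  obtain ⟨a, ha, hhom⟩ := hN fun τ => triangleType L (τ 0) (τ 1) (τ 2)
  exact hav _ rfl (contains_Dgraph_four_of_isHomogeneous hL ha hhom)

end Complete

/-- The order chromatic number of the edge-ordered diamond `D_4`
satisfies `10 ≤ χ'_<(D_4) < ∞`; in particular `K_9` can avoid `D_4` (witnessing
`χ'_<(D_4) > 9`), while some finite simple graph cannot avoid `D_4`. -/
theorem orderChrom_diamond :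
    10 ≤ orderChrom {Dgraph 4} ∧ orderChrom {Dgraph 4} < ⊤ ∧
      CanAvoid (⊤ : SimpleGraph (Fin 9)) {Dgraph 4} := by
  obtain ⟨N, hN⟩ := exists_not_canAvoid_top
  refine ⟨le_orderChrom_of_colorable (k := 9) fun _ _ hG => ?_, orderChrom_lt_top hN,
    diamondFreeK9, diamondFreeK9_valid, by rintro _ rfl; exact diamondFreeK9_avoids⟩
  exact canAvoid_of_colorable diamondFreeK9_valid diamondFreeK9_avoids blowupSignK9_ne hG
end

section
/- For every edge-ordering L of the complete graph K_4, the order chromatic number χ'_<(K_4^L) is infinite; equivalently, χ^-(K_4) = ∞, i.e., for every linear ordering of the six edges of K_4, every finite simple graph can avoid the resulting edge-ordered graph. -/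
/-!
Label the edges of the host graph on `Fin n` lexicographically and colexicographically by
their endpoints. In a lexicographic labeling, the edges of a copy of `K_k` at its smallest
vertex `v` come before all edges avoiding `v`; in a colexicographic labeling, the edges at its
largest vertex `w` come after all edges avoiding `w`. For `k ≥ 4` there is an edge through both
`v` and `w` and an edge avoiding both, so no edge-ordering of `K_k` embeds into both labelings:
one of the two avoids it.
-/

lemma symLabel_mk {N : ℕ} (f : Fin N → Fin N → ℕ) (a b : Fin N) :
    symLabel f s(a, b) = f (min a b) (max a b) := rfl

lemma Sym2.mk_min_max {α : Type*} [LinearOrder α] (a b : α) :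
    s(min a b, max a b) = s(a, b) := by
  rcases le_total a b with h | h
  · rw [min_eq_left h, max_eq_right h]
  · rw [min_eq_right h, max_eq_left h, Sym2.eq_swap]

lemma symLabel_injective {N : ℕ} {f : Fin N → Fin N → ℕ}
    (hf : ∀ a b c d, f a b = f c d → a = c ∧ b = d) : Function.Injective (symLabel f) := by
  intro e e' h
  induction e using Sym2.ind with | _ a b =>
  induction e' using Sym2.ind with | _ c d =>
  obtain ⟨hmin, hmax⟩ := hf _ _ _ _ h
  rw [← Sym2.mk_min_max a b, ← Sym2.mk_min_max c d, hmin, hmax]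

lemma Nat.mul_add_lt_mul_add {m m' r r' n : ℕ} (hr : r < n) (hm : m < m') :
    m * n + r < m' * n + r' :=
  calc m * n + r < (m + 1) * n := by rw [add_one_mul]; omega
    _ ≤ m' * n := Nat.mul_le_mul_right n hm
    _ ≤ m' * n + r' := Nat.le_add_right _ _

lemma Nat.eq_and_eq_of_mul_add_eq {m m' r r' n : ℕ} (hr : r < n) (hr' : r' < n)
    (h : m * n + r = m' * n + r') : m = m' ∧ r = r' := by
  obtain rfl : m = m' := by
    by_contra hne
    rcases lt_or_gt_of_ne hne with hlt | hlt
    · exact (Nat.mul_add_lt_mul_add hr hlt).ne h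
    · exact (Nat.mul_add_lt_mul_add hr' hlt).ne h.symm
  exact ⟨rfl, by omega⟩

def lexLabel (n : ℕ) : Sym2 (Fin n) → ℕ := symLabel fun a b => a * n + b

def colexLabel (n : ℕ) : Sym2 (Fin n) → ℕ := symLabel fun a b => b * n + a

lemma lexLabel_injective (n : ℕ) : Function.Injective (lexLabel n) :=
  symLabel_injective fun _ b _ d h =>
    (Nat.eq_and_eq_of_mul_add_eq b.isLt d.isLt h).imp Fin.ext Fin.ext

lemma colexLabel_injective (n : ℕ) : Function.Injective (colexLabel n) :=
  symLabel_injective fun a _ c _ h =>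
    ((Nat.eq_and_eq_of_mul_add_eq a.isLt c.isLt h).imp Fin.ext Fin.ext).symm

lemma lexLabel_lt {n : ℕ} {a b c d : Fin n} (hab : a < b) (hac : a < c) (had : a < d) :
    lexLabel n s(a, b) < lexLabel n s(c, d) := by
  rw [lexLabel, symLabel_mk, symLabel_mk, min_eq_left hab.le, max_eq_right hab.le]
  exact Nat.mul_add_lt_mul_add b.isLt (lt_min hac had)

lemma colexLabel_lt {n : ℕ} {a b c d : Fin n} (hba : b < a) (hca : c < a) (hda : d < a) :
    colexLabel n s(c, d) < colexLabel n s(a, b) := by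
  rw [colexLabel, symLabel_mk, symLabel_mk, min_eq_right hba.le, max_eq_left hba.le]
  exact Nat.mul_add_lt_mul_add (min c d).isLt (max_lt hca hda)

lemma exists_edge_through_and_edge_avoiding {k : ℕ} (hk : 4 ≤ k) (v w : Fin k) :
    ∃ x y p q : Fin k, x ≠ v ∧ y ≠ w ∧ s(v, x) = s(w, y) ∧
      p ≠ q ∧ p ≠ v ∧ q ≠ v ∧ p ≠ w ∧ q ≠ w := by
  have hcard : 1 < (Finset.univ \ {v, w}).card := by
    have := Finset.card_le_two (a := v) (b := w)
    rw [Finset.card_sdiff_of_subset (Finset.subset_univ _), Finset.card_univ, Fintype.card_fin]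
    omega
  obtain ⟨p, hp, q, hq, hpq⟩ := Finset.one_lt_card.1 hcard
  simp only [Finset.mem_sdiff, Finset.mem_univ, Finset.mem_insert, Finset.mem_singleton,
    true_and, not_or] at hp hq
  by_cases hvw : v = w
  · subst hvw
    exact ⟨p, p, p, q, hp.1, hp.1, rfl, hpq, hp.1, hq.1, hp.2, hq.2⟩
  · exact ⟨w, v, p, q, Ne.symm hvw, hvw, Sym2.eq_swap, hpq, hp.1, hq.1, hp.2, hq.2⟩

lemma not_contains_complete_lexLabel_and_colexLabel {k n : ℕ} (hk : 4 ≤ k)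
    {G : SimpleGraph (Fin n)} {L : Sym2 (Fin k) → ℕ}
    (hlex : (EOGraph.mk n G (lexLabel n)).Contains (EOGraph.mk k ⊤ L))
    (hcolex : (EOGraph.mk n G (colexLabel n)).Contains (EOGraph.mk k ⊤ L)) : False := by
  obtain ⟨f, -, hf⟩ := hlex
  obtain ⟨g, -, hg⟩ := hcolex
  have : Nonempty (Fin k) := ⟨⟨0, by omega⟩⟩
  obtain ⟨v, hv⟩ := Finite.exists_min f
  obtain ⟨w, hw⟩ := Finite.exists_max g
  have hfv {x} (hx : x ≠ v) : f v < f x := (hv x).lt_of_ne (f.injective.ne hx.symm)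
  have hgw {x} (hx : x ≠ w) : g x < g w := (hw x).lt_of_ne (g.injective.ne hx)
  obtain ⟨x, y, p, q, hx, hy, hvxwy, hpq, hpv, hqv, hpw, hqw⟩ :=
    exists_edge_through_and_edge_avoiding hk v w
  have hlt₁ : L s(v, x) < L s(p, q) :=
    (hf _ _ _ _ (Ne.symm hx) hpq).2 (lexLabel_lt (hfv hx) (hfv hpv) (hfv hqv))
  have hlt₂ : L s(p, q) < L s(w, y) :=
    (hg _ _ _ _ hpq (Ne.symm hy)).2 (colexLabel_lt (hgw hy) (hgw hpw) (hgw hqw))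
  rw [hvxwy] at hlt₁
  exact lt_asymm hlt₁ hlt₂

lemma canAvoid_complete {k : ℕ} (hk : 4 ≤ k) (L : Sym2 (Fin k) → ℕ) {n : ℕ}
    (G : SimpleGraph (Fin n)) : CanAvoid G {EOGraph.mk k ⊤ L} := by
  by_cases hlex : (EOGraph.mk n G (lexLabel n)).Contains (EOGraph.mk k ⊤ L)
  · refine ⟨colexLabel n, fun e _ e' _ h => colexLabel_injective n h, ?_⟩
    rintro _ rfl hcolex
    exact not_contains_complete_lexLabel_and_colexLabel hk hlex hcolex
  · refine ⟨lexLabel n, fun e _ e' _ h => lexLabel_injective n h, ?_⟩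
    rintro _ rfl
    exact hlex

lemma orderChrom_eq_top_of_forall_canAvoid {F : Set EOGraph}
    (h : ∀ n (G : SimpleGraph (Fin n)), CanAvoid G F) : orderChrom F = ⊤ := by
  simp only [orderChrom, iInf_eq_top]
  exact fun n G hG => (hG (h n G)).elim

theorem orderChrom_K4_eq_top_general (L : Sym2 (Fin 4) → ℕ) :
    orderChrom {EOGraph.mk 4 ⊤ L} = ⊤ :=
  orderChrom_eq_top_of_forall_canAvoid fun _ G => canAvoid_complete le_rfl L G

/-- For every edge-ordering `L` of the complete graph `K_4`, the
order chromatic number of `K_4^L` is infinite: every finite simple graph can avoid the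
resulting edge-ordered graph. -/
theorem orderChrom_K4_eq_top (L : Sym2 (Fin 4) → ℕ)
    (hL : (EOGraph.mk 4 ⊤ L).Valid) :
    orderChrom {EOGraph.mk 4 ⊤ L} = ⊤ :=
  orderChrom_K4_eq_top_general L
end

section
/- Let G be a simple graph with n ≥ 1 vertices and m edges that contains no cycle of length 4 or more. Then m ≤ (3/2)(n − 1). -/
/-!
Take a longest path `a = p₀, p₁, p₂, …`. Every neighbour of `a` lies on it, and a neighbour `pᵢ`
with `i ≥ 3` would close a cycle of length `i + 1 ≥ 4`; so `a` is a pendant vertex, or `a p₁ p₂`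
is a triangle, and then maximality of the path and the absence of 4-cycles leave `p₁` with no
further neighbour either. Deleting `a` (one edge, one vertex) or `a` and `p₁` (three edges, two
vertices) preserves `2m ≤ 3(n - 1)`, so induction on the number of edges applies once `n` counts
only non-isolated vertices.
-/

namespace SimpleGraph

variable {V : Type*} {G H : SimpleGraph V} {a b c d u v y : V}

def CyclesShorterThan (G : SimpleGraph V) (k : ℕ) : Prop :=
  ∀ (v : V) (c : G.Walk v v), c.IsCycle → c.length < k

namespace CyclesShorterThan

variable {k : ℕ}

theorem anti (hle : H ≤ G) (hG : G.CyclesShorterThan k) : H.CyclesShorterThan k :=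
  fun v c hc => by simpa using hG v (c.mapLe hle) ((Walk.isCycle_mapLe hle).2 hc)

theorem length_le_two_of_adj (hG : G.CyclesShorterThan 4) (h : G.Adj u v) {q : G.Walk u v}
    (hq : q.IsPath) : q.length ≤ 2 := by
  by_cases he : s(u, v) ∈ q.edges
  · exact (hq.length_eq_one_of_mem_edges he).trans_le one_le_two
  · have := hG v _ ((Walk.cons_isCycle_iff q h.symm).2 ⟨hq, Sym2.eq_swap ▸ he⟩)
    simp only [Walk.length_cons] at this
    omega

theorem getVert_one_eq_or_getVert_two_eq (hG : G.CyclesShorterThan 4) {p : G.Walk u v} (hp : p.IsPath)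
    (hy : y ∈ p.support) (h : G.Adj u y) : p.getVert 1 = y ∨ p.getVert 2 = y := by
  classical
  have hpos : (p.takeUntil y hy).length ≠ 0 := fun h0 =>
    h.ne (Walk.eq_of_length_eq_zero h0)
  have hle := hG.length_le_two_of_adj h (hp.takeUntil hy)
  have hget := p.getVert_length_takeUntil hy
  obtain h1 | h2 : (p.takeUntil y hy).length = 1 ∨ (p.takeUntil y hy).length = 2 := by omega
  exacts [.inl (h1 ▸ hget), .inr (h2 ▸ hget)]

theorem false_of_square (hG : G.CyclesShorterThan 4) (hab : G.Adj a b) (hbc : G.Adj b c)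
    (hcd : G.Adj c d) (hda : G.Adj d a) (hac : a ≠ c) (hbd : b ≠ d) : False := by
  have hcyc : (Walk.cons hab (.cons hbc (.cons hcd (.cons hda .nil)))).IsCycle := by
    have := hab.ne; have := hbc.ne; have := hcd.ne; have := hda.ne
    simp [Walk.isCycle_def, Walk.isTrail_def]
    aesop
  simpa using hG a _ hcyc

end CyclesShorterThan

def Walk.IsLongestPath (p : G.Walk u v) : Prop :=
  p.IsPath ∧ ∀ ⦃x y : V⦄ (q : G.Walk x y), q.IsPath → q.length ≤ p.length

theorem exists_isLongestPath [Finite V] [Nonempty V] :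
    ∃ (u v : V) (p : G.Walk u v), p.IsLongestPath := by
  classical
  have := Fintype.ofFinite V
  let P : ℕ → Prop := fun k => ∃ (u v : V) (p : G.Walk u v), p.IsPath ∧ p.length = k
  have hP0 : P 0 := ⟨Classical.arbitrary V, _, .nil, .nil, rfl⟩
  obtain ⟨u, v, p, hp, hlen⟩ := Nat.findGreatest_spec (Nat.zero_le (Fintype.card V)) hP0
  exact ⟨u, v, p, hp, fun x y q hq =>
    hlen ▸ Nat.le_findGreatest hq.length_lt.le ⟨x, y, q, hq, rfl⟩⟩

namespace Walk.IsLongestPath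

variable {p : G.Walk u v}

theorem mem_support_of_adj (hp : p.IsLongestPath) (h : G.Adj u y) : y ∈ p.support := by
  by_contra hy
  simpa using hp.2 (.cons h.symm p) (hp.1.cons hy)

theorem neighborSet_subset (hG : G.CyclesShorterThan 4) (hp : p.IsLongestPath) :
    G.neighborSet u ⊆ {p.getVert 1, p.getVert 2} := fun y h => by
  rcases hG.getVert_one_eq_or_getVert_two_eq hp.1 (hp.mem_support_of_adj h) h with h1 | h2
  exacts [.inl h1.symm, .inr h2.symm]

theorem neighborSet_snd_subset (hG : G.CyclesShorterThan 4) {a w₁ w₂ z : V}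
    {h₁ : G.Adj a w₁} {h₂ : G.Adj w₁ w₂} {r : G.Walk w₂ z}
    (hp : (Walk.cons h₁ (.cons h₂ r)).IsLongestPath) (ha : G.Adj a w₂) :
    G.neighborSet w₁ ⊆ {a, w₂} := by
  intro y hy
  by_contra hy'
  simp only [Set.mem_insert_iff, Set.mem_singleton_iff, not_or] at hy'
  obtain ⟨hya, hyw₂⟩ := hy'
  obtain ⟨⟨hr, hw₁r⟩, har⟩ := by simpa only [Walk.cons_isPath_iff] using hp.1
  by_cases hyr : y ∈ (Walk.cons h₂ r).support
  · rcases hG.getVert_one_eq_or_getVert_two_eq (hr.cons hw₁r) hyr hy with h | h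
    · exact hyw₂ (by simpa using h.symm)
    · -- `y` is the vertex after `w₂` on the path, so `a w₁ y w₂` is a 4-cycle
      simp only [Walk.getVert_cons_succ] at h
      have hr0 : r.length ≠ 0 := fun h0 => hyw₂ <| by
        rw [← h, r.getVert_of_length_le (by omega), Walk.eq_of_length_eq_zero h0]
      have hw₂y : G.Adj w₂ y := by simpa [h] using r.adj_getVert_succ (Nat.pos_of_ne_zero hr0)
      exact hG.false_of_square h₁ hy hw₂y.symm ha.symm (Ne.symm hya) h₂.ne
  · -- otherwise `y w₁ a w₂ …` is a longer path
    have hlonger : (Walk.cons hy.symm (.cons h₁.symm (.cons ha r))).IsPath := by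
      simp_all [Walk.cons_isPath_iff, h₁.ne.symm, hy.ne.symm]
    simpa using hp.2 _ hlonger

end Walk.IsLongestPath

theorem CyclesShorterThan.exists_pendant_or_ear [Finite V] (hG : G.CyclesShorterThan 4)
    (hE : G.edgeSet.Nonempty) :
    ∃ a b, G.Adj a b ∧ (G.neighborSet a ⊆ {b} ∨
      ∃ c, G.Adj a c ∧ G.Adj b c ∧ G.neighborSet a ⊆ {b, c} ∧ G.neighborSet b ⊆ {a, c}) := by
  obtain ⟨⟨x, y⟩, hxy⟩ := hE
  have : Nonempty V := ⟨x⟩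
  obtain ⟨a, z, p, hp⟩ := G.exists_isLongestPath
  have hN := hp.neighborSet_subset hG
  have hlen : 1 ≤ p.length := hp.2 hxy.toWalk hxy.isPath_toWalk
  cases p with
  | nil => simp at hlen
  | cons h₁ q =>
    cases q with
    | nil => exact ⟨a, _, h₁, .inl (by simpa using hN)⟩
    | @cons _ w₂ _ h₂ r =>
      by_cases ha : G.Adj a w₂
      · exact ⟨a, _, h₁, .inr ⟨w₂, ha, h₂, by simpa using hN, hp.neighborSet_snd_subset hG ha⟩⟩
      · refine ⟨a, _, h₁, .inl fun y hy => ?_⟩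
        rcases hN hy with h | h
        · exact h
        · simp only [Set.mem_singleton_iff, Walk.getVert_cons_succ, Walk.getVert_zero] at h
          exact absurd (h ▸ hy) ha

theorem ncard_edgeSet_deleteIncidenceSet_add [Finite V] (G : SimpleGraph V) (x : V) :
    (G.deleteIncidenceSet x).edgeSet.ncard + (G.neighborSet x).ncard = G.edgeSet.ncard := by
  classical
  rw [edgeSet_deleteIncidenceSet, ← Set.ncard_congr' (G.incidenceSetEquivNeighborSet x)]
  exact Set.ncard_sdiff_add_ncard_of_subset (G.incidenceSet_subset x)

theorem ncard_edgeSet_deleteIncidenceSet_lt [Finite V] (hab : G.Adj a b) :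
    (G.deleteIncidenceSet a).edgeSet.ncard < G.edgeSet.ncard := by
  have hE := G.ncard_edgeSet_deleteIncidenceSet_add a
  have hNa : 0 < (G.neighborSet a).ncard := (Set.ncard_pos).2 ⟨b, hab⟩
  omega

theorem two_mul_ncard_edgeSet_le_of_pendant [Finite V] (hab : G.Adj a b)
    (hN : G.neighborSet a ⊆ {b})
    (ih : 2 * (G.deleteIncidenceSet a).edgeSet.ncard ≤
      3 * ((G.deleteIncidenceSet a).support.ncard - 1)) :
    2 * G.edgeSet.ncard ≤ 3 * (G.support.ncard - 1) := by
  have hE := G.ncard_edgeSet_deleteIncidenceSet_add a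
  have hNa : (G.neighborSet a).ncard ≤ 1 :=
    (Set.ncard_le_ncard hN).trans_eq (Set.ncard_singleton b)
  have hS := Set.ncard_le_ncard (G.support_deleteIncidenceSet_subset a)
  have hb : b ∈ G.support \ {a} := ⟨⟨a, hab.symm⟩, hab.ne'⟩
  have hpos := (Set.ncard_pos).2 ⟨b, hb⟩
  rw [Set.ncard_sdiff_singleton_of_mem (show a ∈ G.support from ⟨b, hab⟩)] at hS hpos
  omega

theorem two_mul_ncard_edgeSet_le_of_ear [Finite V] (hab : G.Adj a b) (hac : G.Adj a c)
    (hbc : G.Adj b c) (hNa : G.neighborSet a ⊆ {b, c}) (hNb : G.neighborSet b ⊆ {a, c})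
    (ih : 2 * ((G.deleteIncidenceSet a).deleteIncidenceSet b).edgeSet.ncard ≤
      3 * (((G.deleteIncidenceSet a).deleteIncidenceSet b).support.ncard - 1)) :
    2 * G.edgeSet.ncard ≤ 3 * (G.support.ncard - 1) := by
  have hE := G.ncard_edgeSet_deleteIncidenceSet_add a
  have hE' := (G.deleteIncidenceSet a).ncard_edgeSet_deleteIncidenceSet_add b
  have hNa' : (G.neighborSet a).ncard ≤ 2 := (Set.ncard_le_ncard hNa).trans
    ((Set.ncard_insert_le b {c}).trans_eq (by simp))
  have hNb' : ((G.deleteIncidenceSet a).neighborSet b).ncard ≤ 1 := by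
    refine (Set.ncard_le_ncard fun y hy => ?_).trans_eq (Set.ncard_singleton c)
    obtain ⟨hby, -, hya⟩ := deleteIncidenceSet_adj.1 hy
    simpa [hya] using hNb hby
  have hS := Set.ncard_le_ncard
    (((G.deleteIncidenceSet a).support_deleteIncidenceSet_subset b).trans
      (Set.sdiff_subset_sdiff_left (G.support_deleteIncidenceSet_subset a)))
  have hc : c ∈ (G.support \ {a}) \ {b} := ⟨⟨⟨a, hac.symm⟩, hac.ne'⟩, hbc.ne'⟩
  have hpos := (Set.ncard_pos).2 ⟨c, hc⟩
  rw [Set.ncard_sdiff_singleton_of_mem (show b ∈ G.support \ {a} from ⟨⟨c, hbc⟩, hab.ne'⟩),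
    Set.ncard_sdiff_singleton_of_mem (show a ∈ G.support from ⟨c, hac⟩)] at hS hpos
  omega

theorem CyclesShorterThan.two_mul_ncard_edgeSet_le [Finite V] (hG : G.CyclesShorterThan 4) :
    2 * G.edgeSet.ncard ≤ 3 * (G.support.ncard - 1) := by
  induction hm : G.edgeSet.ncard using Nat.strong_induction_on generalizing G with
  | _ m ih =>
  rcases G.edgeSet.eq_empty_or_nonempty with hE | hE
  · simp [hE] at hm
    omega
  obtain ⟨a, b, hab, hN | ⟨c, hac, hbc, hNa, hNb⟩⟩ := hG.exists_pendant_or_ear hE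
  · have hlt := hm ▸ ncard_edgeSet_deleteIncidenceSet_lt hab
    exact hm ▸ two_mul_ncard_edgeSet_le_of_pendant hab hN
      (ih _ hlt (hG.anti (G.deleteIncidenceSet_le a)) rfl)
  · have hle := (G.deleteIncidenceSet a).deleteIncidenceSet_le b
    have hlt := hm ▸ (Set.ncard_le_ncard (edgeSet_mono hle)).trans_lt
      (ncard_edgeSet_deleteIncidenceSet_lt hab)
    exact hm ▸ two_mul_ncard_edgeSet_le_of_ear hab hac hbc hNa hNb
      (ih _ hlt (hG.anti (hle.trans (G.deleteIncidenceSet_le a))) rfl)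

end SimpleGraph

theorem card_edges_le_of_no_long_cycle_general {n : ℕ} (G : SimpleGraph (Fin n))
    (hcyc : ∀ (v : Fin n) (w : G.Walk v v), w.IsCycle → w.length < 4) :
    2 * G.edgeSet.ncard ≤ 3 * (n - 1) := by
  have hS : G.support.ncard ≤ n := by simpa using G.support.ncard_le_card
  have hE := SimpleGraph.CyclesShorterThan.two_mul_ncard_edgeSet_le hcyc
  omega

/-- A simple graph with `n ≥ 1` vertices, `m` edges and no cycle of
length 4 or more satisfies `m ≤ (3/2)(n - 1)`. -/
theorem card_edges_le_of_no_long_cycle {n : ℕ} (hn : 1 ≤ n) (G : SimpleGraph (Fin n))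
    (hcyc : ∀ (v : Fin n) (w : G.Walk v v), w.IsCycle → w.length < 4) :
    2 * G.edgeSet.ncard ≤ 3 * (n - 1) :=
  card_edges_le_of_no_long_cycle_general G hcyc
end

section
/- For every positive integer n, lex(n, P_4^{132}) = lex(n, P_4^{213}) = ⌊(3/2)(n − 1)⌋; that is, the maximum number of edges of an edge-ordered graph on n vertices avoiding P_4^{132} (equivalently, avoiding P_4^{213}) is ⌊3(n−1)/2⌋. -/
/-- The edge-ordered path `P_4^{132}` on vertices `a,b,c,d`: edge-order `ab < cd < bc`. -/
def P4_132 : EOGraph := pathEO 4 [1, 3, 2]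

/-- The edge-ordered path `P_4^{213}` on vertices `a,b,c,d`: edge-order `bc < ab < cd`. -/
def P4_213 : EOGraph := pathEO 4 [2, 1, 3]

/-! Let the edge-order of a `P_4^{132}`-free graph be given by an injective labelling `L`. If the
middle edge of a path `x y z w` is larger than both outer edges, then `x = w`: otherwise the path
or its reverse is a copy of `P_4^{132}`. Call an edge a *peak* if each of its endpoints carries a
smaller edge. For a peak `uv` the smaller edges at `u` and at `v` then close a triangle, so each
endpoint of a peak carries exactly one smaller edge; hence two peaks never share a vertex, and the
peaks form a matching missing an endpoint of the smallest edge `pq`, so there are at most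
`⌊(n-1)/2⌋` of them. Every other edge is the smallest edge at one of its endpoints, which can be
chosen different from `q`, so there are at most `n - 1` of those. A star with the remaining vertices
matched in pairs, star edges first, attains the bound. Reversing the edge-order turns a copy of
`P_4^{213}` into a reversed copy of `P_4^{132}`, so both extremal numbers agree. -/

def IsP4 {V : Type*} (G : SimpleGraph V) (x y z w : V) : Prop :=
  G.Adj x y ∧ G.Adj y z ∧ G.Adj z w ∧ x ≠ z ∧ x ≠ w ∧ y ≠ w

theorem IsP4.reverse {V : Type*} {G : SimpleGraph V} {x y z w : V} (h : IsP4 G x y z w) :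
    IsP4 G w z y x := by
  obtain ⟨hxy, hyz, hzw, hxz, hxw, hyw⟩ := h
  exact ⟨hzw.symm, hyz.symm, hxy.symm, hyw.symm, hxw.symm, hxz.symm⟩

def HasP4_132 {V α : Type*} [LT α] (G : SimpleGraph V) (L : Sym2 V → α) : Prop :=
  ∃ x y z w, IsP4 G x y z w ∧ L s(x, y) < L s(z, w) ∧ L s(z, w) < L s(y, z)

theorem pathEO_adj {k : ℕ} {l : List ℕ} {a b : Fin k} :
    (pathEO k l).graph.Adj a b ↔ (a : ℕ) + 1 = b ∨ (b : ℕ) + 1 = a := by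
  simp only [pathEO, SimpleGraph.fromRel_adj, ne_eq, Fin.ext_iff]
  omega

theorem pathEO_label_castSucc_succ {k : ℕ} {l : List ℕ} (i : Fin k) :
    (pathEO (k + 1) l).label s(i.castSucc, i.succ) = l.getD i 0 := by
  simp [pathEO, symLabel]

theorem exists_of_pathEO_adj {k : ℕ} {l : List ℕ} {u v : Fin (k + 1)}
    (h : (pathEO (k + 1) l).graph.Adj u v) :
    ∃ i : Fin k, s(u, v) = s(i.castSucc, i.succ) := by
  rcases pathEO_adj.mp h with h | h
  · exact ⟨⟨u, by omega⟩, by rw [Sym2.eq_iff]; left; constructor <;> ext <;> simp; omega⟩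
  · exact ⟨⟨v, by omega⟩, by rw [Sym2.eq_iff]; right; constructor <;> ext <;> simp; omega⟩

theorem contains_pathEO_iff {n k : ℕ} {G : SimpleGraph (Fin n)} {L : Sym2 (Fin n) → ℕ}
    {l : List ℕ} :
    (EOGraph.mk n G L).Contains (pathEO (k + 1) l) ↔
      ∃ f : Fin (k + 1) ↪ Fin n, (∀ i : Fin k, G.Adj (f i.castSucc) (f i.succ)) ∧
        ∀ i j : Fin k, (l.getD i 0 < l.getD j 0 ↔
          L s(f i.castSucc, f i.succ) < L s(f j.castSucc, f j.succ)) := by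
  let P := pathEO (k + 1) l
  -- `Contains` quantifies over `Fin P.nv`, which is `Fin (k + 1)` only up to unfolding.
  change (∃ f : Fin (k + 1) ↪ Fin n,
    (∀ u v : Fin (k + 1), P.graph.Adj u v → G.Adj (f u) (f v)) ∧
    ∀ u v u' v' : Fin (k + 1), P.graph.Adj u v → P.graph.Adj u' v' →
      (P.label s(u, v) < P.label s(u', v') ↔ L s(f u, f v) < L s(f u', f v'))) ↔ _
  have hadj (i : Fin k) : P.graph.Adj i.castSucc i.succ := by simp [P, pathEO_adj]
  constructor
  · rintro ⟨f, hf, hord⟩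
    refine ⟨f, fun i => hf _ _ (hadj i), fun i j => ?_⟩
    rw [← pathEO_label_castSucc_succ, ← pathEO_label_castSucc_succ]
    exact hord _ _ _ _ (hadj i) (hadj j)
  · rintro ⟨f, hf, hord⟩
    have hedge {u v : Fin (k + 1)} (huv : P.graph.Adj u v) : ∃ i : Fin k,
        s(f u, f v) = s(f i.castSucc, f i.succ) ∧ P.label s(u, v) = l.getD i 0 := by
      obtain ⟨i, hi⟩ := exists_of_pathEO_adj huv
      refine ⟨i, ?_, (congrArg P.label hi).trans (pathEO_label_castSucc_succ i)⟩
      rw [← Sym2.map_mk, hi, Sym2.map_mk]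
    refine ⟨f, fun u v huv => ?_, fun u v u' v' huv hu'v' => ?_⟩
    · obtain ⟨i, hi, -⟩ := hedge huv
      rw [← SimpleGraph.mem_edgeSet, hi]
      exact hf i
    · obtain ⟨i, hi, hli⟩ := hedge huv
      obtain ⟨j, hj, hlj⟩ := hedge hu'v'
      rw [hi, hj, hli, hlj]
      exact hord i j

theorem contains_pathEO_four_iff {n : ℕ} {G : SimpleGraph (Fin n)} {L : Sym2 (Fin n) → ℕ}
    {l : List ℕ} :
    (EOGraph.mk n G L).Contains (pathEO 4 l) ↔
      ∃ x y z w, IsP4 G x y z w ∧ ∀ i j : Fin 3, (l.getD i 0 < l.getD j 0 ↔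
        ![L s(x, y), L s(y, z), L s(z, w)] i < ![L s(x, y), L s(y, z), L s(z, w)] j) := by
  rw [contains_pathEO_iff]
  constructor
  · rintro ⟨f, hf, hord⟩
    refine ⟨f 0, f 1, f 2, f 3, ⟨hf 0, hf 1, hf 2, f.injective.ne (by decide),
      f.injective.ne (by decide), f.injective.ne (by decide)⟩, fun i j => ?_⟩
    fin_cases i <;> fin_cases j <;> exact hord _ _
  · rintro ⟨x, y, z, w, ⟨hxy, hyz, hzw, hxz, hxw, hyw⟩, hord⟩
    have hinj : Function.Injective ![x, y, z, w] := by
      intro i j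
      fin_cases i <;> fin_cases j <;> simp [hxy.ne, hyz.ne, hzw.ne, hxz, hxw, hyw,
        hxy.ne.symm, hyz.ne.symm, hzw.ne.symm, hxz.symm, hxw.symm, hyw.symm]
    refine ⟨⟨_, hinj⟩, fun i => ?_, fun i j => ?_⟩
    · fin_cases i
      exacts [hxy, hyz, hzw]
    · fin_cases i <;> fin_cases j <;> exact hord _ _

theorem forall_getD_lt_iff_132 {α : Type*} [LinearOrder α] (m : Fin 3 → α) :
    (∀ i j : Fin 3, ([1, 3, 2].getD i 0 < [1, 3, 2].getD j 0 ↔ m i < m j)) ↔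
      m 0 < m 2 ∧ m 2 < m 1 := by
  refine ⟨fun h => ⟨(h 0 2).1 (by decide), (h 2 1).1 (by decide)⟩,
    fun ⟨h₁, h₂⟩ i j => ?_⟩
  fin_cases i <;> fin_cases j <;> simp <;> order

theorem forall_getD_lt_iff_213 {α : Type*} [LinearOrder α] (m : Fin 3 → α) :
    (∀ i j : Fin 3, ([2, 1, 3].getD i 0 < [2, 1, 3].getD j 0 ↔ m i < m j)) ↔
      m 1 < m 0 ∧ m 0 < m 2 := by
  refine ⟨fun h => ⟨(h 1 0).1 (by decide), (h 0 2).1 (by decide)⟩,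
    fun ⟨h₁, h₂⟩ i j => ?_⟩
  fin_cases i <;> fin_cases j <;> simp <;> order

theorem contains_P4_132_iff {n : ℕ} {G : SimpleGraph (Fin n)} {L : Sym2 (Fin n) → ℕ} :
    (EOGraph.mk n G L).Contains P4_132 ↔ HasP4_132 G L := by
  simp only [P4_132, contains_pathEO_four_iff, forall_getD_lt_iff_132]
  rfl

theorem contains_P4_213_iff {n : ℕ} {G : SimpleGraph (Fin n)} {L : Sym2 (Fin n) → ℕ} :
    (EOGraph.mk n G L).Contains P4_213 ↔
      ∃ x y z w, IsP4 G x y z w ∧ L s(y, z) < L s(x, y) ∧ L s(x, y) < L s(z, w) := by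
  simp only [P4_213, contains_pathEO_four_iff, forall_getD_lt_iff_213]
  rfl

theorem exists_lt_iff_gt {β : Type*} [Fintype β] (L : β → ℕ) :
    ∃ L' : β → ℕ, ∀ e f, L e < L f ↔ L' f < L' e := by
  refine ⟨fun e => Finset.univ.sup L - L e, fun e f => ?_⟩
  have := Finset.le_sup (f := L) (Finset.mem_univ e)
  have := Finset.le_sup (f := L) (Finset.mem_univ f)
  dsimp only
  omega

theorem injOn_iff_of_lt_iff_gt {β γ δ : Type*} [LinearOrder γ] [LinearOrder δ]
    {L : β → γ} {L' : β → δ}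
    (hrev : ∀ e f, L e < L f ↔ L' f < L' e) {s : Set β} :
    Set.InjOn L s ↔ Set.InjOn L' s := by
  have heq (e f : β) : L e = L f ↔ L' e = L' f := by
    simp only [le_antisymm_iff, ← not_lt, hrev]
    tauto
  simp only [Set.InjOn, heq]

theorem contains_P4_213_iff_hasP4_132 {n : ℕ} {G : SimpleGraph (Fin n)}
    {L L' : Sym2 (Fin n) → ℕ} (hrev : ∀ e f, L e < L f ↔ L' f < L' e) :
    (EOGraph.mk n G L).Contains P4_213 ↔ HasP4_132 G L' := by
  rw [contains_P4_213_iff]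
  constructor
  · rintro ⟨x, y, z, w, hp, h₁, h₂⟩
    rw [hrev] at h₁ h₂
    exact ⟨w, z, y, x, hp.reverse, by rwa [Sym2.eq_swap, Sym2.eq_swap (a := y)],
      by rwa [Sym2.eq_swap (a := y), Sym2.eq_swap (a := z)]⟩
  · rintro ⟨w, z, y, x, hp, h₁, h₂⟩
    refine ⟨x, y, z, w, hp.reverse, ?_, ?_⟩ <;> rw [hrev]
    · rwa [Sym2.eq_swap (a := x), Sym2.eq_swap (a := y) (b := z)]
    · rwa [Sym2.eq_swap (a := z), Sym2.eq_swap (a := x) (b := y)]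

theorem valid_and_avoidsFam_P4_213_iff {k : ℕ} (G : SimpleGraph (Fin k))
    {L L' : Sym2 (Fin k) → ℕ} (hrev : ∀ e f, L e < L f ↔ L' f < L' e) :
    (EOGraph.mk k G L).Valid ∧ (EOGraph.mk k G L).AvoidsFam {P4_213} ↔
      (EOGraph.mk k G L').Valid ∧ (EOGraph.mk k G L').AvoidsFam {P4_132} := by
  simp only [EOGraph.AvoidsFam, EOGraph.Avoids, Set.mem_singleton_iff, forall_eq,
    contains_P4_132_iff, contains_P4_213_iff_hasP4_132 hrev]
  exact and_congr_left' (injOn_iff_of_lt_iff_gt hrev)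

theorem lexFam_P4_213_eq (n : ℕ) : lexFam n {P4_213} = lexFam n {P4_132} := by
  unfold lexFam
  congr 1
  ext m
  constructor
  · rintro ⟨⟨k, G, L⟩, hk, hV, hA, hE⟩
    obtain ⟨L', hrev⟩ := exists_lt_iff_gt L
    obtain ⟨hV', hA'⟩ := (valid_and_avoidsFam_P4_213_iff G hrev).1 ⟨hV, hA⟩
    exact ⟨⟨k, G, L'⟩, hk, hV', hA', hE⟩
  · rintro ⟨⟨k, G, L'⟩, hk, hV, hA, hE⟩
    obtain ⟨L, hrev⟩ := exists_lt_iff_gt L'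
    obtain ⟨hV', hA'⟩ :=
      (valid_and_avoidsFam_P4_213_iff G fun e f => (hrev f e).symm).2 ⟨hV, hA⟩
    exact ⟨⟨k, G, L⟩, hk, hV', hA', hE⟩

def IsPeak {V α : Type*} [LT α] (G : SimpleGraph V) (L : Sym2 V → α) (e : Sym2 V) : Prop :=
  ∀ v ∈ e, ∃ x, G.Adj v x ∧ L s(v, x) < L e

section UpperBound

open Finset

variable {V α : Type*} [LinearOrder α] {G : SimpleGraph V} {L : Sym2 V → α}

theorem eq_of_middle_edge_max (hL : Set.InjOn L G.edgeSet) (h : ¬ HasP4_132 G L)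
    {x y z w : V} (hxy : G.Adj x y) (hyz : G.Adj y z) (hzw : G.Adj z w)
    (h₁ : L s(x, y) < L s(y, z)) (h₂ : L s(z, w) < L s(y, z)) : x = w := by
  by_contra hxw
  have hxz : x ≠ z := by rintro rfl; exact h₁.ne (congrArg L Sym2.eq_swap)
  have hyw : y ≠ w := by rintro rfl; exact h₂.ne (congrArg L Sym2.eq_swap)
  have hpath : IsP4 G x y z w := ⟨hxy, hyz, hzw, hxz, hxw, hyw⟩
  rcases lt_trichotomy (L s(x, y)) (L s(z, w)) with hlt | heq | hgt
  · exact h ⟨x, y, z, w, hpath, hlt, h₂⟩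
  · rcases Sym2.eq_iff.mp (hL hxy hzw heq) with ⟨rfl, -⟩ | ⟨rfl, -⟩
    exacts [hxz rfl, hxw rfl]
  · exact h ⟨w, z, y, x, hpath.reverse, by rwa [Sym2.eq_swap, Sym2.eq_swap (a := y)],
      by rwa [Sym2.eq_swap (a := y), Sym2.eq_swap (a := z)]⟩

theorem IsPeak.eq_of_lt (hL : Set.InjOn L G.edgeSet) (h : ¬ HasP4_132 G L) {e : Sym2 V}
    (he : e ∈ G.edgeSet) (hp : IsPeak G L e) {u x x' : V} (hu : u ∈ e)
    (hx : G.Adj u x) (hlt : L s(u, x) < L e) (hx' : G.Adj u x') (hlt' : L s(u, x') < L e) :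
    x = x' := by
  obtain ⟨t, rfl⟩ := Sym2.mem_iff_exists.mp hu
  obtain ⟨w, htw, hw⟩ := hp t (Sym2.mem_mk_right u t)
  rw [eq_of_middle_edge_max hL h hx.symm he htw (by rwa [Sym2.eq_swap]) hw,
    eq_of_middle_edge_max hL h hx'.symm he htw (by rwa [Sym2.eq_swap]) hw]

theorem IsPeak.not_lt (hL : Set.InjOn L G.edgeSet) (h : ¬ HasP4_132 G L) {e e' : Sym2 V}
    (he : e ∈ G.edgeSet) (he' : e' ∈ G.edgeSet) (hp : IsPeak G L e) (hp' : IsPeak G L e')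
    {v : V} (hv : v ∈ e) (hv' : v ∈ e') : ¬ L e < L e' := by
  intro hlt
  obtain ⟨u, rfl⟩ := Sym2.mem_iff_exists.mp hv
  obtain ⟨x, hvx, hx⟩ := hp v (Sym2.mem_mk_left v u)
  obtain rfl := hp'.eq_of_lt hL h he' hv' hvx (hx.trans hlt) he hlt
  exact hx.false

theorem IsPeak.eq_of_mem (hL : Set.InjOn L G.edgeSet) (h : ¬ HasP4_132 G L) {e e' : Sym2 V}
    (he : e ∈ G.edgeSet) (he' : e' ∈ G.edgeSet) (hp : IsPeak G L e) (hp' : IsPeak G L e')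
    {v : V} (hv : v ∈ e) (hv' : v ∈ e') : e = e' := by
  rcases lt_trichotomy (L e) (L e') with hlt | heq | hgt
  · exact absurd hlt (hp.not_lt hL h he he' hp' hv hv')
  · exact hL he he' heq
  · exact absurd hgt (hp'.not_lt hL h he' he hp hv' hv)

theorem IsPeak.lt_of_forall_le {e₀ e : Sym2 V} (hp : IsPeak G L e)
    (hmin : ∀ f ∈ G.edgeSet, L e₀ ≤ L f) : L e₀ < L e := by
  obtain ⟨x, hx, hlt⟩ := hp _ (Sym2.out_fst_mem e)
  exact (hmin _ hx).trans_lt hlt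

theorem IsPeak.not_le_of_min_edge (hL : Set.InjOn L G.edgeSet) (h : ¬ HasP4_132 G L)
    {p q : V} (hpq : G.Adj p q) (hmin : ∀ f ∈ G.edgeSet, L s(p, q) ≤ L f) {ea eb : Sym2 V}
    (hea : ea ∈ G.edgeSet) (heb : eb ∈ G.edgeSet) (hpa : IsPeak G L ea) (hpb : IsPeak G L eb)
    (hp : p ∈ ea) (hq : q ∈ eb) : ¬ L ea ≤ L eb := by
  intro hle
  obtain ⟨t, rfl⟩ := Sym2.mem_iff_exists.mp hp
  obtain ⟨w, htw, hw⟩ := hpa t (Sym2.mem_mk_right p t)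
  obtain rfl : q = w := eq_of_middle_edge_max hL h hpq.symm hea htw
    (by rw [Sym2.eq_swap]; exact hpa.lt_of_forall_le hmin) hw
  have htp : t = p := hpb.eq_of_lt hL h heb hq htw.symm
    (by rw [Sym2.eq_swap]; exact hw.trans_le hle) hpq.symm
    (by rw [Sym2.eq_swap]; exact hpb.lt_of_forall_le hmin)
  exact G.ne_of_adj hea htp.symm

theorem exists_forall_isPeak_not_mem (hL : Set.InjOn L G.edgeSet) (h : ¬ HasP4_132 G L)
    {p q : V} (hpq : G.Adj p q) (hmin : ∀ f ∈ G.edgeSet, L s(p, q) ≤ L f) :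
    ∃ v, ∀ e ∈ G.edgeSet, IsPeak G L e → v ∉ e := by
  by_contra! hcov
  obtain ⟨ea, hea, hpa, hp⟩ := hcov p
  obtain ⟨eb, heb, hpb, hq⟩ := hcov q
  have hmin' : ∀ f ∈ G.edgeSet, L s(q, p) ≤ L f := by rw [Sym2.eq_swap]; exact hmin
  rcases le_total (L ea) (L eb) with hle | hle
  · exact hpa.not_le_of_min_edge hL h hpq hmin hea heb hpb hp hq hle
  · exact hpb.not_le_of_min_edge hL h hpq.symm hmin' heb hea hpa hq hp hle

theorem two_mul_card_le_of_pairwise_disjoint [Fintype V] {P : Finset (Sym2 V)}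
    (hdiag : ∀ e ∈ P, ¬ e.IsDiag)
    (hdisj : ∀ e ∈ P, ∀ e' ∈ P, ∀ v ∈ e, v ∈ e' → e = e')
    {v₀ : V} (hv₀ : ∀ e ∈ P, v₀ ∉ e) : 2 * #P ≤ Fintype.card V - 1 := by
  classical
  have hpair : (P : Set (Sym2 V)).PairwiseDisjoint Sym2.toFinset := by
    intro e he e' he' hne
    refine disjoint_left.mpr fun v hv hv' => hne ?_
    exact hdisj e he e' he' v (Sym2.mem_toFinset.mp hv) (Sym2.mem_toFinset.mp hv')
  calc 2 * #P = #(P.biUnion Sym2.toFinset) := by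
        rw [card_biUnion hpair, sum_congr rfl
          fun e he => Sym2.card_toFinset_of_not_isDiag e (hdiag e he), sum_const,
          smul_eq_mul, mul_comm]
    _ ≤ #(univ.erase v₀) := card_le_card fun v hv => by
        obtain ⟨e, he, hve⟩ := mem_biUnion.mp hv
        exact mem_erase.mpr ⟨fun h => hv₀ e he (h ▸ Sym2.mem_toFinset.mp hve), mem_univ v⟩
    _ = Fintype.card V - 1 := by rw [card_erase_of_mem (mem_univ _), card_univ]

theorem card_not_isPeak_le [Fintype V] (hL : Set.InjOn L G.edgeSet)
    {p q : V} (hpq : G.Adj p q) (hmin : ∀ f ∈ G.edgeSet, L s(p, q) ≤ L f)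
    {N : Finset (Sym2 V)} (hN : ∀ e ∈ N, e ∈ G.edgeSet ∧ ¬ IsPeak G L e) :
    #N ≤ Fintype.card V - 1 := by
  classical
  let IsMinAt (v : V) (e : Sym2 V) : Prop := v ∈ e ∧ ∀ x, G.Adj v x → L e ≤ L s(v, x)
  have hunique {v : V} {e e' : Sym2 V} (he : e ∈ G.edgeSet) (he' : e' ∈ G.edgeSet)
      (hm : IsMinAt v e) (hm' : IsMinAt v e') : e = e' := by
    obtain ⟨u, rfl⟩ := Sym2.mem_iff_exists.mp hm.1
    obtain ⟨u', rfl⟩ := Sym2.mem_iff_exists.mp hm'.1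
    exact hL he he' ((hm.2 u' he').antisymm (hm'.2 u he))
  have hpq_min (v : V) (hv : v ∈ s(p, q)) : IsMinAt v s(p, q) :=
    ⟨hv, fun x hx => hmin _ hx⟩
  have hcover : N ⊆ (univ.erase q).biUnion fun v => N.filter (IsMinAt v) := by
    intro e he
    obtain ⟨heE, hnp⟩ := hN e he
    obtain ⟨v, hv, hvmin⟩ : ∃ v ∈ e, ∀ x, G.Adj v x → L e ≤ L s(v, x) := by
      simpa [IsPeak] using hnp
    simp only [mem_biUnion, mem_erase, mem_univ, and_true, mem_filter]
    by_cases hvq : v = q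
    · subst hvq
      obtain rfl := hunique heE hpq ⟨hv, hvmin⟩ (hpq_min v (Sym2.mem_mk_right p v))
      exact ⟨p, hpq.ne, he, hpq_min p (Sym2.mem_mk_left p v)⟩
    · exact ⟨v, hvq, he, hv, hvmin⟩
  calc #N ≤ #((univ.erase q).biUnion fun v => N.filter (IsMinAt v)) := card_le_card hcover
    _ ≤ #(univ.erase q) * 1 := card_biUnion_le_card_mul _ _ _ fun v _ =>
        card_le_one.mpr fun e he e' he' =>
          hunique (hN e (mem_filter.mp he).1).1 (hN e' (mem_filter.mp he').1).1
            (mem_filter.mp he).2 (mem_filter.mp he').2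
    _ = Fintype.card V - 1 := by rw [mul_one, card_erase_of_mem (mem_univ _), card_univ]

theorem ncard_edgeSet_le_of_not_hasP4_132 [Fintype V] (hL : Set.InjOn L G.edgeSet)
    (h : ¬ HasP4_132 G L) : G.edgeSet.ncard ≤ 3 * (Fintype.card V - 1) / 2 := by
  classical
  rw [← G.coe_edgeFinset, Set.ncard_coe_finset]
  obtain hE | ⟨e₀, he₀⟩ := G.edgeFinset.eq_empty_or_nonempty
  · simp [hE]
  obtain ⟨e₀, he₀, hmin⟩ := G.edgeFinset.exists_min_image L ⟨e₀, he₀⟩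
  induction e₀ using Sym2.ind with | h p q => ?_
  have hpq : G.Adj p q := G.mem_edgeFinset.mp he₀
  have hmin' : ∀ f ∈ G.edgeSet, L s(p, q) ≤ L f :=
    fun f hf => hmin f (G.mem_edgeFinset.mpr hf)
  obtain ⟨v₀, hv₀⟩ := exists_forall_isPeak_not_mem hL h hpq hmin'
  have hleaves := card_not_isPeak_le hL hpq hmin'
    (N := G.edgeFinset.filter (¬ IsPeak G L ·)) fun e he => by simpa using he
  have hpeaks := two_mul_card_le_of_pairwise_disjoint (P := G.edgeFinset.filter (IsPeak G L))
    (fun e he => G.not_isDiag_of_mem_edgeSet (by simpa using (mem_filter.mp he).1))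
    (fun e he e' he' v hv hv' => by
      simp only [mem_filter, SimpleGraph.mem_edgeFinset] at he he'
      exact he.2.eq_of_mem hL h he.1 he'.1 he'.2 hv hv')
    (fun e he => by
      simp only [mem_filter, SimpleGraph.mem_edgeFinset] at he
      exact hv₀ e he.1 he.2)
  have hsplit := card_filter_add_card_filter_not (s := G.edgeFinset) (IsPeak G L)
  omega

end UpperBound

theorem not_hasP4_132_of_star_add_matching {V α : Type*} [LinearOrder α] {G : SimpleGraph V}
    {L : Sym2 V → α} (c : V)
    (hmatch : ∀ v x y, v ≠ c → x ≠ c → y ≠ c → G.Adj v x → G.Adj v y → x = y)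
    (hlabel : ∀ v x y, G.Adj c v → G.Adj x y → x ≠ c → y ≠ c →
      L s(c, v) < L s(x, y)) :
    ¬ HasP4_132 G L := by
  rintro ⟨x, y, z, w, ⟨hxy, hyz, hzw, hxz, hxw, hyw⟩, h₁, h₂⟩
  by_cases hy : y = c
  · subst hy
    exact (hlabel z z w hyz hzw hyz.ne' hyw.symm).not_gt h₂
  by_cases hz : z = c
  · subst hz
    have := hlabel w x y hzw hxy hxz hy
    rw [Sym2.eq_swap] at h₂
    order
  have hx : x = c := by_contra fun hx => hxz (hmatch y x z hy hx hz hxy.symm hyz)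
  have hw : w = c := by_contra fun hw => hyw (hmatch z y w hz hy hw hyz.symm hzw)
  exact hxw (hx.trans hw.symm)

/-- The star at `0` together with the matching `{1, 2}, {3, 4}, …`. -/
def starMatching (n : ℕ) : SimpleGraph (Fin n) where
  Adj a b := a ≠ b ∧
    ((a : ℕ) = 0 ∨ (b : ℕ) = 0 ∨ ((a : ℕ) + 1) / 2 = ((b : ℕ) + 1) / 2)
  symm := ⟨fun a b h => ⟨h.1.symm, by omega⟩⟩
  loopless := ⟨fun a h => h.1 rfl⟩

-- Star edges `0v` get label `v < n`, matching edges `ab` get `a + b + n`.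
def starMatchingLabel (n : ℕ) : Sym2 (Fin n) → ℕ :=
  Sym2.lift ⟨fun a b => a + b + if (a : ℕ) = 0 ∨ (b : ℕ) = 0 then 0 else n, fun a b => by
    simp only [or_comm, add_comm]⟩

theorem starMatching_adj {n : ℕ} {a b : Fin n} : (starMatching n).Adj a b ↔
    (a : ℕ) ≠ b ∧
      ((a : ℕ) = 0 ∨ (b : ℕ) = 0 ∨ ((a : ℕ) + 1) / 2 = ((b : ℕ) + 1) / 2) := by
  simp [starMatching, Fin.ext_iff]

theorem injOn_starMatchingLabel (n : ℕ) :
    Set.InjOn (starMatchingLabel n) (starMatching n).edgeSet := by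
  intro e he e' he' heq
  induction e using Sym2.ind with | h a b => ?_
  induction e' using Sym2.ind with | h c d => ?_
  simp only [SimpleGraph.mem_edgeSet, starMatching_adj] at he he'
  simp only [starMatchingLabel, Sym2.lift_mk] at heq
  have := a.isLt; have := b.isLt; have := c.isLt; have := d.isLt
  simp only [Sym2.eq_iff, Fin.ext_iff]
  split_ifs at heq <;> omega

theorem not_hasP4_132_starMatching (n : ℕ) :
    ¬ HasP4_132 (starMatching n) (starMatchingLabel n) := by
  intro hP
  have hn : 0 < n := by obtain ⟨x, -⟩ := hP; exact x.pos
  refine not_hasP4_132_of_star_add_matching ⟨0, hn⟩ (fun v a b hv ha hb hva hvb => ?_)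
    (fun v a b _ _ ha hb => ?_) hP
  · simp only [starMatching_adj, ne_eq, Fin.ext_iff] at hv ha hb hva hvb ⊢
    omega
  · simp only [ne_eq, Fin.ext_iff] at ha hb
    simp [starMatchingLabel, ha, hb]
    omega

theorem ncard_edgeSet_starMatching (n : ℕ) :
    (starMatching n).edgeSet.ncard = 3 * (n - 1) / 2 := by
  let f : Fin (n - 1) ⊕ Fin ((n - 1) / 2) → Sym2 (Fin n) :=
    Sum.elim
      (fun i => s(⟨0, by have := i.is_lt; omega⟩, ⟨i + 1, by have := i.is_lt; omega⟩))
      (fun j => s(⟨2 * j + 1, by have := j.is_lt; omega⟩,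
        ⟨2 * j + 2, by have := j.is_lt; omega⟩))
  have hf : Function.Injective f := by
    rintro (i | j) (i' | j') h <;>
      simp only [f, Sum.elim_inl, Sum.elim_inr, Sym2.eq_iff, Fin.ext_iff] at h <;>
      simp only [Sum.inl.injEq, Sum.inr.injEq, reduceCtorEq, Fin.ext_iff] <;> omega
  have hrange : (starMatching n).edgeSet = Set.range f := by
    ext e
    induction e using Sym2.ind with | h a b => ?_
    simp only [SimpleGraph.mem_edgeSet, starMatching_adj, Set.mem_range, Sum.exists, f,
      Sum.elim_inl, Sum.elim_inr, Sym2.eq_iff, Fin.ext_iff]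
    have := a.isLt; have := b.isLt
    constructor
    · rintro ⟨hab, ha | hb | hab'⟩
      · exact Or.inl ⟨⟨b - 1, by omega⟩, by simp; omega⟩
      · exact Or.inl ⟨⟨a - 1, by omega⟩, by simp; omega⟩
      · exact Or.inr ⟨⟨(a - 1) / 2, by omega⟩, by simp; omega⟩
    · rintro (⟨i, hi⟩ | ⟨j, hj⟩) <;> omega
  rw [hrange, Set.ncard_range_of_injective hf, Nat.card_sum, Nat.card_eq_fintype_card,
    Nat.card_eq_fintype_card, Fintype.card_fin, Fintype.card_fin]
  omega

theorem lex_P4_132_and_213_general (n : ℕ) :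
    lexFam n {P4_132} = 3 * (n - 1) / 2 ∧ lexFam n {P4_213} = 3 * (n - 1) / 2 := by
  have h132 : lexFam n {P4_132} = 3 * (n - 1) / 2 := by
    refine IsGreatest.csSup_eq ⟨⟨⟨n, starMatching n, starMatchingLabel n⟩, rfl,
      injOn_starMatchingLabel n, ?_, ncard_edgeSet_starMatching n⟩, ?_⟩
    · rintro _ rfl
      exact mt contains_P4_132_iff.mp (not_hasP4_132_starMatching n)
    · rintro m ⟨⟨k, G, L⟩, rfl, hV, hA, rfl⟩
      have := ncard_edgeSet_le_of_not_hasP4_132 hV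
        fun h => hA _ rfl (contains_P4_132_iff.mpr h)
      rwa [Fintype.card_fin] at this
  exact ⟨h132, (lexFam_P4_213_eq n).trans h132⟩

/-- For every positive integer `n`,
`lex(n, P_4^{132}) = lex(n, P_4^{213}) = ⌊3(n-1)/2⌋`. -/
theorem lex_P4_132_and_213 (n : ℕ) (hn : 1 ≤ n) :
    lexFam n {P4_132} = 3 * (n - 1) / 2 ∧ lexFam n {P4_213} = 3 * (n - 1) / 2 :=
  lex_P4_132_and_213_general n
end
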